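/- arXiv:1409.5888 — 8 statements merged into one kernel-verified Lean document; each statement's English description precedes it below -/
import Mathlib

section
/- Let α ∈ (0,1], n ∈ ℕ, and suppose f is (n+1) times α-fractional differentiable on [0,∞) with D_α^{n+1} f continuous. Then for all s, t > 0: f(t) = Σ_{k=0}^{n} (1/k!)·((t^α − s^α)/α)^k · D_α^k f(s) + (1/n!)·∫_s^t ((t^α − τ^α)/α)^n · D_α^{n+1} f(τ) · τ^{α−1} dτ. -/
/-!
For `τ > 0` one has `D_α g (τ) * τ ^ (α - 1) = g' (τ)`, so
`∫_s^t D_α g (τ) τ ^ (α - 1) dτ = g t - g s`; this is the case `n = 0`. The induction step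
integrates the remainder by parts against `w τ = (t ^ α - τ ^ α) / α`, which vanishes at `t`
and has `D_α w = -1`, i.e. `(-w ^ (m + 1) / (m + 1))' = w ^ m τ ^ (α - 1)`: this trades one
power of `w` for one conformable derivative of `g` and produces the next Taylor term at `s`.
-/

open Set MeasureTheory intervalIntegral

noncomputable def condD (α : ℝ) (f : ℝ → ℝ) : ℝ → ℝ :=
  fun t => t ^ (1 - α) * deriv f t

section

variable {α : ℝ} {g : ℝ → ℝ} {s t : ℝ}

lemma condD_mul_rpow_sub_one {τ : ℝ} (hτ : 0 < τ) :
    condD α g τ * τ ^ (α - 1) = deriv g τ := by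
  rw [condD, mul_right_comm, ← Real.rpow_add hτ, sub_add_sub_cancel', sub_self,
    Real.rpow_zero, one_mul]

lemma DifferentiableAt.hasDerivAt_condD_mul_rpow {τ : ℝ} (hg : DifferentiableAt ℝ g τ)
    (hτ : 0 < τ) : HasDerivAt g (condD α g τ * τ ^ (α - 1)) τ := by
  rw [condD_mul_rpow_sub_one hτ]
  exact hg.hasDerivAt

lemma hasDerivAt_sub_rpow_div (hα : α ≠ 0) (c : ℝ) {τ : ℝ} (hτ : 0 < τ) :
    HasDerivAt (fun x : ℝ => (c - x ^ α) / α) (-τ ^ (α - 1)) τ :=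
  (((Real.hasDerivAt_rpow_const (Or.inl hτ.ne')).const_sub c).div_const α).congr_deriv
    (by field_simp)

lemma ContinuousOn.intervalIntegrable_mul_rpow {h : ℝ → ℝ} (hh : ContinuousOn h (uIcc s t))
    (hst : uIcc s t ⊆ Ioi 0) :
    IntervalIntegrable (fun τ => h τ * τ ^ (α - 1)) volume s t :=
  (hh.mul fun x hx => (Real.continuousAt_rpow_const x (α - 1)
    (Or.inl (hst hx).ne')).continuousWithinAt).intervalIntegrable

lemma integral_condD_mul_rpow (hst : uIcc s t ⊆ Ioi 0)
    (hg : ∀ x ∈ uIcc s t, DifferentiableAt ℝ g x)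
    (hc : ContinuousOn (condD α g) (uIcc s t)) :
    ∫ τ in s..t, condD α g τ * τ ^ (α - 1) = g t - g s :=
  integral_eq_sub_of_hasDerivAt (fun x hx => (hg x hx).hasDerivAt_condD_mul_rpow (hst hx))
    (hc.intervalIntegrable_mul_rpow hst)

lemma integral_pow_mul_rpow_eq_add_integral_condD (hα : α ≠ 0) (m : ℕ)
    (hst : uIcc s t ⊆ Ioi 0) (hg : ∀ x ∈ uIcc s t, DifferentiableAt ℝ g x)
    (hc : ContinuousOn (condD α g) (uIcc s t)) :
    ∫ τ in s..t, ((t ^ α - τ ^ α) / α) ^ m * g τ * τ ^ (α - 1)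
      = ((t ^ α - s ^ α) / α) ^ (m + 1) / (m + 1) * g s
        + 1 / (m + 1) *
          ∫ τ in s..t, ((t ^ α - τ ^ α) / α) ^ (m + 1) * condD α g τ * τ ^ (α - 1) := by
  set w : ℝ → ℝ := fun τ => (t ^ α - τ ^ α) / α
  have hw : ∀ x ∈ uIcc s t, HasDerivAt w (-x ^ (α - 1)) x := fun x hx =>
    hasDerivAt_sub_rpow_div hα _ (hst hx)
  have hwc : ContinuousOn w (uIcc s t) := fun x hx => (hw x hx).continuousAt.continuousWithinAt
  have hv : ∀ x ∈ uIcc s t,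
      HasDerivAt (fun τ => -(w τ ^ (m + 1) / (m + 1))) (w x ^ m * x ^ (α - 1)) x := by
    intro x hx
    refine (((hw x hx).pow (m + 1)).div_const (m + 1 : ℝ)).neg.congr_deriv ?_
    push_cast
    field_simp
  have ibp := integral_mul_deriv_eq_deriv_mul
    (fun x hx => (hg x hx).hasDerivAt_condD_mul_rpow (hst hx)) hv
    (hc.intervalIntegrable_mul_rpow hst) ((hwc.pow m).intervalIntegrable_mul_rpow hst)
  have hwt : w t = 0 := by simp [w]
  rw [hwt, zero_pow m.succ_ne_zero, zero_div, neg_zero, mul_zero, zero_sub] at ibp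
  have hlhs : ∫ x in s..t, g x * (w x ^ m * x ^ (α - 1))
      = ∫ τ in s..t, ((t ^ α - τ ^ α) / α) ^ m * g τ * τ ^ (α - 1) := by
    congr 1; ext; ring
  have hrhs : ∫ x in s..t, condD α g x * x ^ (α - 1) * -(w x ^ (m + 1) / (m + 1))
      = -(1 / (m + 1)) *
        ∫ τ in s..t, ((t ^ α - τ ^ α) / α) ^ (m + 1) * condD α g τ * τ ^ (α - 1) := by
    rw [← intervalIntegral.integral_const_mul]; congr 1; ext; ring
  rw [← hlhs, ibp, hrhs]
  ring

end

/-- Taylor's formula for conformable fractional derivatives. -/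
theorem conformable_taylor (α : ℝ) (hα : 0 < α ∧ α ≤ 1) (n : ℕ) (f : ℝ → ℝ)
    (hdiff : ∀ k ≤ n, ∀ x ∈ Ioi (0:ℝ), DifferentiableAt ℝ ((condD α)^[k] f) x)
    (hcont : ContinuousOn ((condD α)^[n+1] f) (Ioi (0:ℝ)))
    (s t : ℝ) (hs : 0 < s) (ht : 0 < t) :
    f t = (∑ k ∈ Finset.range (n+1),
        (1 / (k.factorial : ℝ)) * ((t ^ α - s ^ α) / α) ^ k * (condD α)^[k] f s)
      + (1 / (n.factorial : ℝ)) *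
        ∫ τ in s..t, ((t ^ α - τ ^ α) / α) ^ n * (condD α)^[n+1] f τ * τ ^ (α - 1) := by
  have hst : uIcc s t ⊆ Ioi 0 := fun x hx => (lt_min hs ht).trans_le hx.1
  induction n with
  | zero =>
    have hftc :=
      integral_condD_mul_rpow hst (fun x hx => hdiff 0 le_rfl x (hst hx)) (hcont.mono hst)
    simp only [zero_add, Finset.sum_range_one, Function.iterate_zero_apply, Function.iterate_one,
      Nat.factorial_zero, Nat.cast_one, pow_zero, div_one, one_mul, mul_one] at hftc ⊢
    rw [hftc]
    ring
  | succ m ih =>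
    have hD : ∀ x ∈ Ioi 0, DifferentiableAt ℝ ((condD α)^[m + 1] f) x := hdiff (m + 1) le_rfl
    rw [Function.iterate_succ_apply'] at hcont ⊢
    rw [Finset.sum_range_succ, ih (fun k hk => hdiff k (hk.trans m.le_succ))
        (fun x hx => (hD x hx).continuousAt.continuousWithinAt),
      integral_pow_mul_rpow_eq_add_integral_condD hα.1.ne' m hst (fun x hx => hD x (hst hx))
        (hcont.mono hst),
      Nat.factorial_succ]
    push_cast
    field_simp
    ring
end

section
/- Let α ∈ (0,1], 0 ≤ a < b, let g : [a,b] → [0,1] with g·t^{α−1} integrable, and let ℓ := (α(b−a)/(b^α − a^α))·∫_a^b g(t) t^{α−1} dt. Then (b^α − (b−ℓ)^α)/α ≤ ∫_a^b g(t) t^{α−1} dt ≤ ((a+ℓ)^α − a^α)/α. -/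
open Set MeasureTheory intervalIntegral

/-!
Write `I` for the fractional integral. Since `0 ≤ g ≤ 1`, `0 ≤ I ≤ ∫_a^b t^(α-1) dt = (b^α - a^α)/α`,
so `ℓ = θ (b - a)` with `θ := α I / (b^α - a^α) ∈ [0, 1]`, and `α I = θ (b^α - a^α)`. Both bounds
then say that the chord of the concave function `x ↦ x^α` over `[a, b]` lies below its graph, at the
points `a + ℓ` and `b - ℓ`.
-/

theorem ConcaveOn.mul_sub_le_sub_left {s : Set ℝ} {f : ℝ → ℝ} (hf : ConcaveOn ℝ s f) {a b θ : ℝ}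
    (ha : a ∈ s) (hb : b ∈ s) (hθ₀ : 0 ≤ θ) (hθ₁ : θ ≤ 1) :
    θ * (f b - f a) ≤ f (a + θ * (b - a)) - f a := by
  have h := hf.2 ha hb (sub_nonneg.2 hθ₁) hθ₀ (sub_add_cancel 1 θ)
  simp only [smul_eq_mul] at h
  have hx : (1 - θ) * a + θ * b = a + θ * (b - a) := by ring
  rw [hx] at h
  linarith

theorem ConcaveOn.sub_right_le_mul_sub {s : Set ℝ} {f : ℝ → ℝ} (hf : ConcaveOn ℝ s f) {a b θ : ℝ}
    (ha : a ∈ s) (hb : b ∈ s) (hθ₀ : 0 ≤ θ) (hθ₁ : θ ≤ 1) :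
    f b - f (b - θ * (b - a)) ≤ θ * (f b - f a) := by
  have h := hf.mul_sub_le_sub_left ha hb (sub_nonneg.2 hθ₁) (by linarith : 1 - θ ≤ 1)
  have hx : a + (1 - θ) * (b - a) = b - θ * (b - a) := by ring
  rw [hx] at h
  linarith

theorem intervalIntegral.integral_mul_mem_Icc_of_mem_Icc {a b : ℝ} (hab : a ≤ b) {g w : ℝ → ℝ}
    (hg : ∀ t ∈ Icc a b, g t ∈ Icc (0 : ℝ) 1) (hw : ∀ t ∈ Icc a b, 0 ≤ w t)
    (hgw : IntervalIntegrable (fun t => g t * w t) volume a b)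
    (hwi : IntervalIntegrable w volume a b) :
    ∫ t in a..b, g t * w t ∈ Icc 0 (∫ t in a..b, w t) := by
  constructor
  · exact integral_nonneg hab fun t ht => mul_nonneg (hg t ht).1 (hw t ht)
  · exact integral_mono_on hab hgw hwi fun t ht =>
      mul_le_of_le_one_left (hw t ht) (hg t ht).2

theorem integral_rpow_sub_one {α : ℝ} (hα : 0 < α) (a b : ℝ) :
    ∫ t in a..b, t ^ (α - 1) = (b ^ α - a ^ α) / α := by
  rw [integral_rpow (Or.inl (by linarith)), sub_add_cancel]

/-- Bounds on the α-fractional integral of `g` in terms of `ℓ`. -/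
theorem steffensen_lemma (α a b : ℝ) (hα : 0 < α ∧ α ≤ 1) (ha : 0 ≤ a) (hab : a < b)
    (g : ℝ → ℝ) (hg : ∀ t ∈ Icc a b, g t ∈ Icc (0:ℝ) 1)
    (hgi : IntervalIntegrable (fun t => g t * t ^ (α - 1)) volume a b)
    (ℓ : ℝ) (hℓ : ℓ = (α * (b - a) / (b ^ α - a ^ α)) * ∫ t in a..b, g t * t ^ (α - 1)) :
    (b ^ α - (b - ℓ) ^ α) / α ≤ (∫ t in a..b, g t * t ^ (α - 1)) ∧
    (∫ t in a..b, g t * t ^ (α - 1)) ≤ ((a + ℓ) ^ α - a ^ α) / α := by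
  obtain ⟨hα₀, hα₁⟩ := hα
  set I := ∫ t in a..b, g t * t ^ (α - 1)
  have hgap : 0 < b ^ α - a ^ α := sub_pos.2 (Real.rpow_lt_rpow ha hab hα₀)
  obtain ⟨hI₀, hI₁⟩ : I ∈ Icc 0 ((b ^ α - a ^ α) / α) := by
    rw [← integral_rpow_sub_one hα₀]
    exact integral_mul_mem_Icc_of_mem_Icc hab.le hg
      (fun t ht => Real.rpow_nonneg (ha.trans ht.1) _) hgi
      (intervalIntegrable_rpow' (by linarith))
  set θ := α * I / (b ^ α - a ^ α)
  have hθ₀ : 0 ≤ θ := by positivity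
  have hθ₁ : θ ≤ 1 := by
    rw [div_le_one hgap]
    rw [le_div_iff₀ hα₀] at hI₁
    linarith
  have hℓθ : ℓ = θ * (b - a) := by rw [hℓ]; ring
  have hθI : θ * (b ^ α - a ^ α) = α * I := div_mul_cancel₀ _ hgap.ne'
  have hconc : ConcaveOn ℝ (Ici 0) fun x : ℝ => x ^ α := Real.concaveOn_rpow hα₀.le hα₁
  have hmem_a : a ∈ Ici (0 : ℝ) := ha
  have hmem_b : b ∈ Ici (0 : ℝ) := ha.trans hab.le
  have hleft := hconc.mul_sub_le_sub_left hmem_a hmem_b hθ₀ hθ₁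
  have hright := hconc.sub_right_le_mul_sub hmem_a hmem_b hθ₀ hθ₁
  rw [hℓθ, div_le_iff₀ hα₀, le_div_iff₀ hα₀]
  constructor <;> linarith
end

section
/- Let α ∈ (0,1], 0 < a < b, n ≥ −1, and f be (n+2) times α-fractional differentiable with appropriate continuity. Then ∫_a^b (D_α^{n+1} f(s)/(n+1)!)·((a^α − s^α)/α)^{n+1} s^{α−1} ds = ∫_a^b R_{n,f}(b,s) s^{α−1} ds, where R_{n,f}(t,s) := f(s) − Σ_{k=0}^{n} (D_α^k f(t)/k!)·((s^α − t^α)/α)^k. -/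
/-!
Put `φ s = s ^ α / α`, so that `φ' s = s ^ (α - 1)` and the conformable derivative is the derivative
with respect to `φ`: `(D_α^k f)' = φ' · D_α^(k+1) f`. The identity is then Taylor's formula with
integral remainder in the variable `φ`, proved by induction on the order for any `φ` and any chain
`F k` with `(F k)' = φ' · F (k + 1)`. Passing from order `m` to `m + 1`, integrating the left side by
parts and integrating the new Taylor term on the right both produce the same boundary term
`F m b (φ a - φ b) ^ (m + 1) / (m + 1)!`.
-/

open Set MeasureTheory intervalIntegral

section TaylorAlongPhi

variable {a b : ℝ} {φ w : ℝ → ℝ}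

theorem integral_taylor_term_succ {g g' : ℝ → ℝ} (n : ℕ)
    (hφ : ∀ s ∈ uIcc a b, HasDerivAt φ (w s) s) (hw : ContinuousOn w (uIcc a b))
    (hg : ∀ s ∈ uIcc a b, HasDerivAt g (w s * g' s) s) (hg' : ContinuousOn g' (uIcc a b)) :
    ∫ s in a..b, g' s / (n + 1).factorial * (φ a - φ s) ^ (n + 1) * w s =
      (∫ s in a..b, g s / n.factorial * (φ a - φ s) ^ n * w s) +
        g b / (n + 1).factorial * (φ a - φ b) ^ (n + 1) := by
  have hφc : ContinuousOn φ (uIcc a b) := fun s hs => (hφ s hs).continuousAt.continuousWithinAt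
  have hgc : ContinuousOn g (uIcc a b) := fun s hs => (hg s hs).continuousAt.continuousWithinAt
  have hint_succ : IntervalIntegrable
      (fun s => g' s / (n + 1).factorial * (φ a - φ s) ^ (n + 1) * w s) volume a b :=
    ContinuousOn.intervalIntegrable (by fun_prop)
  have hint : IntervalIntegrable
      (fun s => g s / n.factorial * (φ a - φ s) ^ n * w s) volume a b :=
    ContinuousOn.intervalIntegrable (by fun_prop)
  have hderiv : ∀ s ∈ uIcc a b,
      HasDerivAt (fun s => g s * (φ a - φ s) ^ (n + 1) / (n + 1).factorial)
      (g' s / (n + 1).factorial * (φ a - φ s) ^ (n + 1) * w s -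
        g s / n.factorial * (φ a - φ s) ^ n * w s) s := by
    intro s hs
    refine (((hg s hs).mul (((hφ s hs).const_sub (φ a)).fun_pow (n + 1))).div_const
      ((n + 1).factorial : ℝ)).congr_deriv ?_
    rw [Nat.factorial_succ]
    push_cast
    field_simp
    ring
  have hftc := integral_eq_sub_of_hasDerivAt hderiv (hint_succ.sub hint)
  rw [intervalIntegral.integral_sub hint_succ hint] at hftc
  simp only [sub_self, zero_pow n.succ_ne_zero, mul_zero, zero_div, sub_zero] at hftc
  rw [eq_add_of_sub_eq hftc]
  ring

theorem integral_pow_sub_mul_deriv (hφ : ∀ s ∈ uIcc a b, HasDerivAt φ (w s) s)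
    (hw : ContinuousOn w (uIcc a b)) (c : ℝ) (n : ℕ) :
    ∫ s in a..b, (φ s - c) ^ n * w s =
      ((φ b - c) ^ (n + 1) - (φ a - c) ^ (n + 1)) / (n + 1) := by
  have h := integral_comp_mul_deriv hφ hw (g := fun u => (u - c) ^ n) (by fun_prop)
  simp only [Function.comp_def] at h
  rw [h, integral_comp_sub_right (fun u => u ^ n), integral_pow]

theorem integral_taylor_remainder {F : ℕ → ℝ → ℝ} (m : ℕ)
    (hφ : ∀ s ∈ uIcc a b, HasDerivAt φ (w s) s) (hw : ContinuousOn w (uIcc a b))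
    (hF : ∀ k < m, ∀ s ∈ uIcc a b, HasDerivAt (F k) (w s * F (k + 1) s) s)
    (hFm : ContinuousOn (F m) (uIcc a b)) :
    ∫ s in a..b, F m s / m.factorial * (φ a - φ s) ^ m * w s =
      ∫ s in a..b, (F 0 s - ∑ k ∈ Finset.range m,
        F k b / k.factorial * (φ s - φ b) ^ k) * w s := by
  induction m with
  | zero => simp
  | succ m ih =>
    have hφc : ContinuousOn φ (uIcc a b) :=
      fun s hs => (hφ s hs).continuousAt.continuousWithinAt
    have hFc : ∀ k < m + 1, ContinuousOn (F k) (uIcc a b) :=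
      fun k hk s hs => (hF k hk s hs).continuousAt.continuousWithinAt
    have hrem : IntervalIntegrable (fun s => (F 0 s - ∑ k ∈ Finset.range m,
        F k b / k.factorial * (φ s - φ b) ^ k) * w s) volume a b := by
      have hF0 := hFc 0 m.succ_pos
      exact ContinuousOn.intervalIntegrable (by fun_prop)
    have hterm : IntervalIntegrable
        (fun s => F m b / m.factorial * ((φ s - φ b) ^ m * w s)) volume a b :=
      ContinuousOn.intervalIntegrable (by fun_prop)
    rw [integral_taylor_term_succ m hφ hw (hF m m.lt_succ_self) hFm,
      ih (fun k hk => hF k (hk.trans m.lt_succ_self)) (hFc m m.lt_succ_self)]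
    calc
      _ = (∫ s in a..b, (F 0 s - ∑ k ∈ Finset.range m,
            F k b / k.factorial * (φ s - φ b) ^ k) * w s) -
          F m b / m.factorial * ∫ s in a..b, (φ s - φ b) ^ m * w s := by
        rw [integral_pow_sub_mul_deriv hφ hw, sub_self, zero_pow m.succ_ne_zero,
          Nat.factorial_succ]
        push_cast
        field_simp
        ring
      _ = _ := by
        rw [← intervalIntegral.integral_const_mul, ← intervalIntegral.integral_sub hrem hterm]
        congr 1 with s
        rw [Finset.sum_range_succ]
        ring

end TaylorAlongPhi

section Conformable

variable {α : ℝ}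

theorem hasDerivAt_rpow_div_self (hα : α ≠ 0) {s : ℝ} (hs : 0 < s) :
    HasDerivAt (fun s => s ^ α / α) (s ^ (α - 1)) s := by
  refine ((Real.hasDerivAt_rpow_const (Or.inl hs.ne')).div_const α).congr_deriv ?_
  field_simp

theorem hasDerivAt_of_condD {g : ℝ → ℝ} {s : ℝ} (hs : 0 < s) (hg : DifferentiableAt ℝ g s) :
    HasDerivAt g (s ^ (α - 1) * condD α g s) s := by
  refine hg.hasDerivAt.congr_deriv ?_
  rw [condD, ← mul_assoc, ← Real.rpow_add hs]
  norm_num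

end Conformable

/-- `m` is the paper's `n + 1`, so the case `n = -1` (empty Taylor sum) is `m = 0`. -/
theorem taylor_remainder_corollary (α a b : ℝ) (hα : 0 < α ∧ α ≤ 1)
    (ha : 0 < a) (hab : a < b) (m : ℕ) (f : ℝ → ℝ)
    (hdiff : ∀ k ≤ m, ∀ x ∈ Ioi (0:ℝ), DifferentiableAt ℝ ((condD α)^[k] f) x)
    (hcont : ContinuousOn ((condD α)^[m] f) (Icc a b)) :
    (∫ s in a..b, ((condD α)^[m] f s / (m.factorial : ℝ)) *
        ((a ^ α - s ^ α) / α) ^ m * s ^ (α - 1)) =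
      ∫ s in a..b, (f s - ∑ k ∈ Finset.range m,
        ((condD α)^[k] f b / (k.factorial : ℝ)) * ((s ^ α - b ^ α) / α) ^ k) *
          s ^ (α - 1) := by
  have hpos : ∀ s ∈ uIcc a b, 0 < s := by
    rw [uIcc_of_le hab.le]
    exact fun s hs => ha.trans_le hs.1
  have hw : ContinuousOn (fun s : ℝ => s ^ (α - 1)) (uIcc a b) :=
    continuousOn_id.rpow_const fun s hs => Or.inl (hpos s hs).ne'
  have hF : ∀ k < m, ∀ s ∈ uIcc a b, HasDerivAt ((condD α)^[k] f)
      (s ^ (α - 1) * (condD α)^[k + 1] f s) s := by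
    intro k hk s hs
    rw [Function.iterate_succ_apply']
    exact hasDerivAt_of_condD (hpos s hs) (hdiff k hk.le s (hpos s hs))
  have h := integral_taylor_remainder m
    (fun s hs => hasDerivAt_rpow_div_self hα.1.ne' (hpos s hs)) hw hF
    (by rwa [uIcc_of_le hab.le])
  simpa only [sub_div, Function.iterate_zero_apply] using h
end

section
/- Hermite–Hadamard inequality I for conformable derivatives: Let α ∈ (0,1], 0 < a < b, and f : [a,b] → ℝ be α-fractional differentiable such that D_α f is increasing and f is decreasing on [a,b]. Then f((a+b)/2) ≤ (α/(b^α − a^α))·∫_a^b f(s) s^{α−1} ds ≤ f(b) + f(a) − f((a+b)/2). -/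
open Set MeasureTheory intervalIntegral

/-!
Substituting `u = s ^ α` turns the α-fractional average of `f` over `[a, b]` into the ordinary
average of `g u = f (u ^ α⁻¹)` over `[a ^ α, b ^ α]`, and `g' u = D_α f (u ^ α⁻¹) / α`, so `g` is
convex. Integrating `2 g(m) ≤ g u + g (A + B - u) ≤ g A + g B` (with `m` the midpoint of `[A, B]`)
gives the classical Hermite–Hadamard inequality
`g ((a ^ α + b ^ α) / 2) ≤ average ≤ (f a + f b) / 2`. Concavity of `t ↦ t ^ α` places
`((a ^ α + b ^ α) / 2) ^ α⁻¹` left of `(a + b) / 2`, so the left inequality follows as `f` is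
decreasing, and the right one because then `f ((a + b) / 2) ≤ (f a + f b) / 2`.
-/

section HermiteHadamard

variable {g : ℝ → ℝ} {A B : ℝ}

theorem ConvexOn.two_mul_map_midpoint_le (hg : ConvexOn ℝ (Icc A B) g) {u : ℝ}
    (hu : u ∈ Icc A B) : 2 * g ((A + B) / 2) ≤ g u + g (A + B - u) := by
  have hu' : A + B - u ∈ Icc A B := ⟨by linarith [hu.2], by linarith [hu.1]⟩
  have h := hg.2 hu hu' (by norm_num : (0 : ℝ) ≤ 1 / 2) (by norm_num : (0 : ℝ) ≤ 1 / 2)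
    (by norm_num)
  simp only [smul_eq_mul] at h
  rw [show 1 / 2 * u + 1 / 2 * (A + B - u) = (A + B) / 2 by ring] at h
  linarith

theorem ConvexOn.map_add_map_reflect_le (hg : ConvexOn ℝ (Icc A B) g) {u : ℝ}
    (hu : u ∈ Icc A B) : g u + g (A + B - u) ≤ g A + g B := by
  obtain ⟨hAu, huB⟩ := hu
  rcases hAu.eq_or_lt with rfl | hAu
  · simp
  have hAB : 0 < B - A := by linarith
  have hA : A ∈ Icc A B := ⟨le_rfl, by linarith⟩
  have hB : B ∈ Icc A B := ⟨by linarith, le_rfl⟩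
  have hw₁ : 0 ≤ (B - u) / (B - A) := div_nonneg (by linarith) hAB.le
  have hw₂ : 0 ≤ (u - A) / (B - A) := div_nonneg (by linarith) hAB.le
  have hsum : (B - u) / (B - A) + (u - A) / (B - A) = 1 := by field_simp; ring
  have h₁ := hg.2 hA hB hw₁ hw₂ hsum
  have h₂ := hg.2 hA hB hw₂ hw₁ (by linarith)
  simp only [smul_eq_mul] at h₁ h₂
  rw [show (B - u) / (B - A) * A + (u - A) / (B - A) * B = u by field_simp; ring] at h₁
  rw [show (u - A) / (B - A) * A + (B - u) / (B - A) * B = A + B - u by field_simp; ring] at h₂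
  linear_combination h₁ + h₂ + (g A + g B) * hsum

theorem IntervalIntegrable.comp_reflect (hg : IntervalIntegrable g volume A B) :
    IntervalIntegrable (fun u => g (A + B - u)) volume A B := by
  simpa using (hg.comp_sub_left (A + B)).symm

theorem integral_comp_reflect : ∫ u in A..B, g (A + B - u) = ∫ u in A..B, g u := by
  rw [integral_comp_sub_left]; ring_nf

theorem integral_add_comp_reflect (hg : IntervalIntegrable g volume A B) :
    ∫ u in A..B, (g u + g (A + B - u)) = 2 * ∫ u in A..B, g u := by
  rw [integral_add hg hg.comp_reflect, integral_comp_reflect]; ring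

theorem ConvexOn.sub_mul_map_midpoint_le_integral (hg : ConvexOn ℝ (Icc A B) g)
    (hint : IntervalIntegrable g volume A B) (hAB : A ≤ B) :
    (B - A) * g ((A + B) / 2) ≤ ∫ u in A..B, g u := by
  have h := integral_mono_on hAB intervalIntegrable_const (hint.add hint.comp_reflect)
    fun u hu => hg.two_mul_map_midpoint_le hu
  rw [integral_add_comp_reflect hint, intervalIntegral.integral_const, smul_eq_mul] at h
  linarith

theorem ConvexOn.integral_le_sub_mul_average_endpoints (hg : ConvexOn ℝ (Icc A B) g)
    (hint : IntervalIntegrable g volume A B) (hAB : A ≤ B) :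
    ∫ u in A..B, g u ≤ (B - A) * ((g A + g B) / 2) := by
  have h := integral_mono_on hAB (hint.add hint.comp_reflect) intervalIntegrable_const
    fun u hu => hg.map_add_map_reflect_le hu
  rw [integral_add_comp_reflect hint, intervalIntegral.integral_const, smul_eq_mul] at h
  linarith

end HermiteHadamard

section ConformableSubstitution

variable {α a b : ℝ} {f : ℝ → ℝ}

theorem Real.rpow_inv_mean_rpow_le_mean (hα₀ : 0 < α) (hα₁ : α ≤ 1) (ha : 0 ≤ a) (hb : 0 ≤ b) :
    ((a ^ α + b ^ α) / 2) ^ α⁻¹ ≤ (a + b) / 2 := by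
  rw [Real.rpow_inv_le_iff_of_pos (by positivity) (by positivity) hα₀]
  have h := (Real.concaveOn_rpow hα₀.le hα₁).2 (mem_Ici.2 ha) (mem_Ici.2 hb)
    (by norm_num : (0 : ℝ) ≤ 1 / 2) (by norm_num : (0 : ℝ) ≤ 1 / 2) (by norm_num)
  simp only [smul_eq_mul] at h
  rw [show 1 / 2 * a + 1 / 2 * b = (a + b) / 2 by ring] at h
  linarith

theorem Real.mapsTo_rpow_inv_Icc_rpow (hα : 0 < α) (ha : 0 ≤ a) (hb : 0 ≤ b) :
    MapsTo (fun u => u ^ α⁻¹) (Icc (a ^ α) (b ^ α)) (Icc a b) := fun u ⟨hau, hub⟩ =>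
  have hu : 0 ≤ u := (Real.rpow_nonneg ha α).trans hau
  ⟨(Real.le_rpow_inv_iff_of_pos ha hu hα).2 hau, (Real.rpow_inv_le_iff_of_pos hu hb hα).2 hub⟩

theorem ContinuousOn.comp_rpow_inv (hα : 0 < α) (ha : 0 ≤ a) (hb : 0 ≤ b)
    (hf : ContinuousOn f (Icc a b)) :
    ContinuousOn (fun u => f (u ^ α⁻¹)) (Icc (a ^ α) (b ^ α)) :=
  hf.comp (Real.continuous_rpow_const (inv_pos.2 hα).le).continuousOn
    (Real.mapsTo_rpow_inv_Icc_rpow hα ha hb)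

theorem hasDerivAt_comp_rpow_inv {u : ℝ} (hα : α ≠ 0) (hu : 0 < u)
    (hf : DifferentiableAt ℝ f (u ^ α⁻¹)) :
    HasDerivAt (fun v => f (v ^ α⁻¹)) (condD α f (u ^ α⁻¹) / α) u := by
  refine (hf.hasDerivAt.comp u (Real.hasDerivAt_rpow_const (Or.inl hu.ne'))).congr_deriv ?_
  simp only [condD]
  rw [← Real.rpow_mul hu.le, show α⁻¹ * (1 - α) = α⁻¹ - 1 by field_simp]
  field_simp

theorem convexOn_comp_rpow_inv (hα : 0 < α) (ha : 0 < a) (hb : 0 ≤ b)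
    (hdiff : ∀ x ∈ Icc a b, DifferentiableAt ℝ f x) (hmono : MonotoneOn (condD α f) (Icc a b)) :
    ConvexOn ℝ (Icc (a ^ α) (b ^ α)) (fun u => f (u ^ α⁻¹)) := by
  have hmaps := Real.mapsTo_rpow_inv_Icc_rpow hα ha.le hb
  have hderiv : ∀ u ∈ interior (Icc (a ^ α) (b ^ α)),
      HasDerivAt (fun v => f (v ^ α⁻¹)) (condD α f (u ^ α⁻¹) / α) u := by
    intro u hu
    rw [interior_Icc] at hu
    exact hasDerivAt_comp_rpow_inv hα.ne' ((Real.rpow_pos_of_pos ha α).trans hu.1)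
      (hdiff _ (hmaps (Ioo_subset_Icc_self hu)))
  refine MonotoneOn.convexOn_of_deriv (convex_Icc _ _)
    (ContinuousOn.comp_rpow_inv hα ha.le hb fun x hx => (hdiff x hx).continuousAt.continuousWithinAt)
    (fun u hu => (hderiv u hu).differentiableAt.differentiableWithinAt) ?_
  intro u hu v hv huv
  rw [(hderiv u hu).deriv, (hderiv v hv).deriv]
  have hu' := interior_subset hu
  exact div_le_div_of_nonneg_right (hmono (hmaps hu') (hmaps (interior_subset hv))
    (Real.rpow_le_rpow ((Real.rpow_nonneg ha.le α).trans hu'.1) huv (inv_pos.2 hα).le)) hα.le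

theorem integral_mul_rpow_sub_one_eq (hα : α ≠ 0) (ha : 0 < a) (hb : 0 < b)
    (hf : ContinuousOn f (uIcc a b)) :
    ∫ s in a..b, f s * s ^ (α - 1) = (∫ u in a ^ α..b ^ α, f (u ^ α⁻¹)) / α := by
  have hpos : ∀ s ∈ uIcc a b, 0 < s := fun s hs => (lt_min ha hb).trans_le hs.1
  have hsubst : ∫ s in a..b, f ((s ^ α) ^ α⁻¹) * (α * s ^ (α - 1))
      = ∫ u in a ^ α..b ^ α, f (u ^ α⁻¹) := by
    refine integral_comp_mul_deriv' (g := fun u => f (u ^ α⁻¹))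
      (fun s hs => Real.hasDerivAt_rpow_const (Or.inl (hpos s hs).ne'))
      (fun s hs => ((Real.continuousAt_rpow_const _ _ (Or.inl (hpos s hs).ne')).const_mul
        α).continuousWithinAt) ?_
    refine hf.comp (fun u hu => ?_) ?_
    · obtain ⟨s, hs, rfl⟩ := hu
      exact (Real.continuousAt_rpow_const _ _
        (Or.inl (Real.rpow_pos_of_pos (hpos s hs) α).ne')).continuousWithinAt
    · rintro _ ⟨s, hs, rfl⟩
      simpa [Real.rpow_rpow_inv (hpos s hs).le hα] using hs
  rw [eq_div_iff hα, ← hsubst, ← intervalIntegral.integral_mul_const]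
  refine integral_congr fun s hs => ?_
  simp only [Real.rpow_rpow_inv (hpos s hs).le hα]
  ring

end ConformableSubstitution

theorem hermite_hadamard_I_general (α a b : ℝ) (hα : 0 < α ∧ α ≤ 1)
    (ha : 0 < a) (hab : a < b) (f : ℝ → ℝ)
    (hdiff : ∀ x ∈ Icc a b, DifferentiableAt ℝ f x)
    (hinc : MonotoneOn (condD α f) (Icc a b))
    (hdec : AntitoneOn f (Icc a b)) :
    f ((a + b) / 2) ≤ (α / (b ^ α - a ^ α)) * (∫ s in a..b, f s * s ^ (α - 1)) ∧
    (α / (b ^ α - a ^ α)) * (∫ s in a..b, f s * s ^ (α - 1)) ≤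
      f b + f a - f ((a + b) / 2) := by
  obtain ⟨hα₀, hα₁⟩ := hα
  have hb : 0 < b := ha.trans hab
  have hAB : a ^ α < b ^ α := Real.rpow_lt_rpow ha.le hab hα₀
  have hfc : ContinuousOn f (Icc a b) := fun x hx => (hdiff x hx).continuousAt.continuousWithinAt
  set g : ℝ → ℝ := fun u => f (u ^ α⁻¹) with hg_def
  have hgc : ConvexOn ℝ (Icc (a ^ α) (b ^ α)) g := convexOn_comp_rpow_inv hα₀ ha hb.le hdiff hinc
  have hgi : IntervalIntegrable g volume (a ^ α) (b ^ α) :=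
    (ContinuousOn.comp_rpow_inv hα₀ ha.le hb.le hfc).intervalIntegrable_of_Icc hAB.le
  have havg : α / (b ^ α - a ^ α) * ∫ s in a..b, f s * s ^ (α - 1)
      = (∫ u in a ^ α..b ^ α, g u) / (b ^ α - a ^ α) := by
    rw [integral_mul_rpow_sub_one_eq hα₀.ne' ha hb (by rwa [uIcc_of_le hab.le]),
      div_mul_div_comm, mul_comm α, mul_div_mul_right _ _ hα₀.ne']
  have hlower : g ((a ^ α + b ^ α) / 2) ≤ (∫ u in a ^ α..b ^ α, g u) / (b ^ α - a ^ α) := by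
    rw [le_div_iff₀ (sub_pos.2 hAB), mul_comm]
    exact hgc.sub_mul_map_midpoint_le_integral hgi hAB.le
  have hupper : (∫ u in a ^ α..b ^ α, g u) / (b ^ α - a ^ α) ≤ (f a + f b) / 2 := by
    rw [div_le_iff₀ (sub_pos.2 hAB), mul_comm]
    simpa [hg_def, Real.rpow_rpow_inv, ha.le, hb.le, hα₀.ne'] using
      hgc.integral_le_sub_mul_average_endpoints hgi hAB.le
  have hmid : f ((a + b) / 2) ≤ g ((a ^ α + b ^ α) / 2) :=
    hdec (Real.mapsTo_rpow_inv_Icc_rpow hα₀ ha.le hb.le ⟨by linarith, by linarith⟩)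
      ⟨by linarith, by linarith⟩ (Real.rpow_inv_mean_rpow_le_mean hα₀ hα₁ ha.le hb.le)
  rw [havg]
  constructor <;> linarith

/-- Hermite–Hadamard inequality I for conformable derivatives. -/
theorem hermite_hadamard_I (α a b : ℝ) (hα : 0 < α ∧ α ≤ 1)
    (ha : 0 < a) (hab : a < b) (f : ℝ → ℝ)
    (hdiff : ∀ x ∈ Icc a b, DifferentiableAt ℝ f x)
    (hinc : MonotoneOn (condD α f) (Icc a b))
    (hdec : AntitoneOn f (Icc a b))
    (hint : IntervalIntegrable (fun s => f s * s ^ (α - 1)) volume a b) :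
    f ((a + b) / 2) ≤ (α / (b ^ α - a ^ α)) * (∫ s in a..b, f s * s ^ (α - 1)) ∧
    (α / (b ^ α - a ^ α)) * (∫ s in a..b, f s * s ^ (α - 1)) ≤
      f b + f a - f ((a + b) / 2) :=
  hermite_hadamard_I_general α a b hα ha hab f hdiff hinc hdec
end

section
/- Let α ∈ (0,1], 0 < a < b, and suppose D_α^{n+1} f is increasing on [a,b]. Then 0 ≥ ∫_a^b R_{n,f}(a,t) t^{α−1} dt − ((D_α^n f(b) − D_α^n f(a))/(n+2)!)·((b^α − a^α)/α)^{n+1} ≥ ((D_α^{n+1} f(a) − D_α^{n+1} f(b))/(n+2)!)·((b^α − a^α)/α)^{n+2}. -/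
open Set MeasureTheory intervalIntegral

noncomputable def taylorRem (α : ℝ) (f : ℝ → ℝ) (n : ℕ) (t s : ℝ) : ℝ :=
  f s - ∑ k ∈ Finset.range (n+1),
    ((condD α)^[k] f t / (k.factorial : ℝ)) * ((s ^ α - t ^ α) / α) ^ k

/-!
Put `φ s = s ^ α / α`, so that `φ' s = s ^ (α - 1)` and `D_α = d/dφ`: the statement is classical
Taylor theory in the variable `φ`. For `F k = D_α^k f`, which satisfies `(F k)' = φ' · F (k + 1)`,
the weighted remainder integral telescopes to `∫ F (n + 1) · φ' · (φ b - φ)^(n + 1) / (n + 1)!`.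
Subtracting from this kernel its `φ'`-mean `(φ b - φ a)^(n + 1) / (n + 2)!` leaves a decreasing
weight of `φ'`-integral zero, which changes sign exactly once; against the increasing `F (n + 1)`
it integrates to something nonpositive (Čebyšev), and bounding `F (n + 1)` by its values at the
endpoints gives the lower bound.
-/

theorem hasDerivAt_mul_pow_sub_div_factorial {G φ : ℝ → ℝ} {G₁ p c s : ℝ} (k : ℕ)
    (hG : HasDerivAt G (p * G₁) s) (hφ : HasDerivAt φ p s) :
    HasDerivAt (fun u => G u * (c - φ u) ^ (k + 1) / ((k + 1).factorial : ℝ))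
      (G₁ * (p * ((c - φ s) ^ (k + 1) / ((k + 1).factorial : ℝ)))
        - G s * (p * ((c - φ s) ^ k / (k.factorial : ℝ)))) s := by
  refine ((hG.mul ((hφ.const_sub c).fun_pow (k + 1))).div_const
    ((k + 1).factorial : ℝ)).congr_deriv ?_
  rw [Nat.factorial_succ]
  push_cast
  field_simp
  ring

theorem hasDerivAt_sum_mul_pow_sub_div_factorial {F : ℕ → ℝ → ℝ} {φ : ℝ → ℝ} {p c s : ℝ}
    (n : ℕ) (hF : ∀ k ≤ n, HasDerivAt (F k) (p * F (k + 1) s) s) (hφ : HasDerivAt φ p s) :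
    HasDerivAt
      (fun u => ∑ k ∈ Finset.range (n + 1), F k u * (c - φ u) ^ (k + 1) / ((k + 1).factorial : ℝ))
      (F (n + 1) s * (p * ((c - φ s) ^ (n + 1) / ((n + 1).factorial : ℝ))) - F 0 s * p) s := by
  have h := HasDerivAt.fun_sum (u := Finset.range (n + 1)) fun k hk =>
    hasDerivAt_mul_pow_sub_div_factorial (c := c) k
      (hF k (Nat.lt_succ_iff.mp (Finset.mem_range.mp hk))) hφ
  rw [Finset.sum_range_sub (fun j => F j s * (p * ((c - φ s) ^ j / (j.factorial : ℝ))))] at h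
  simpa using h

section
variable {a b : ℝ} {φ p : ℝ → ℝ}

theorem integral_pow_sub_left_mul_deriv (hab : a ≤ b) (hφ : ∀ s ∈ Icc a b, HasDerivAt φ (p s) s)
    (hp : ContinuousOn p (Icc a b)) (m : ℕ) :
    ∫ s in a..b, (φ s - φ a) ^ m * p s = (φ b - φ a) ^ (m + 1) / (m + 1) := by
  rw [← uIcc_of_le hab] at hφ hp
  have hsubst := integral_comp_mul_deriv hφ hp (continuous_pow m |>.comp (continuous_sub_right (φ a)))
  simp only [Function.comp_def] at hsubst
  rw [hsubst, integral_comp_sub_right (fun x => x ^ m), integral_pow]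
  simp

theorem integral_pow_sub_right_mul_deriv (hab : a ≤ b) (hφ : ∀ s ∈ Icc a b, HasDerivAt φ (p s) s)
    (hp : ContinuousOn p (Icc a b)) (m : ℕ) :
    ∫ s in a..b, (φ b - φ s) ^ m * p s = (φ b - φ a) ^ (m + 1) / (m + 1) := by
  rw [← uIcc_of_le hab] at hφ hp
  have hsubst := integral_comp_mul_deriv hφ hp (continuous_pow m |>.comp (continuous_sub_left (φ b)))
  simp only [Function.comp_def] at hsubst
  rw [hsubst, integral_comp_sub_left (fun x => x ^ m), integral_pow]
  simp

theorem integral_mul_pow_sub_div_factorial (hab : a ≤ b)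
    (hφ : ∀ s ∈ Icc a b, HasDerivAt φ (p s) s) (hp : ContinuousOn p (Icc a b)) (m : ℕ) :
    ∫ s in a..b, p s * ((φ b - φ s) ^ m / (m.factorial : ℝ))
      = (φ b - φ a) ^ (m + 1) / ((m + 1).factorial : ℝ) := by
  simp only [mul_comm (p _), div_mul_eq_mul_div]
  rw [intervalIntegral.integral_div, integral_pow_sub_right_mul_deriv hab hφ hp, Nat.factorial_succ]
  push_cast
  field_simp

theorem integral_taylor_remainder_mul_deriv (hab : a ≤ b)
    (hφ : ∀ s ∈ Icc a b, HasDerivAt φ (p s) s) (hp : ContinuousOn p (Icc a b))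
    {F : ℕ → ℝ → ℝ} {n : ℕ} (hF : ∀ k ≤ n, ∀ s ∈ Icc a b, HasDerivAt (F k) (p s * F (k + 1) s) s)
    (hFi : IntervalIntegrable (F (n + 1)) volume a b) :
    ∫ t in a..b, (F 0 t - ∑ k ∈ Finset.range (n + 1),
        F k a / (k.factorial : ℝ) * (φ t - φ a) ^ k) * p t
      = ∫ s in a..b, F (n + 1) s * (p s * ((φ b - φ s) ^ (n + 1) / ((n + 1).factorial : ℝ))) := by
  have hpow_int := integral_pow_sub_left_mul_deriv hab hφ hp
  rw [← uIcc_of_le hab] at hφ hp hF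
  have hφc : ContinuousOn φ (uIcc a b) := fun s hs => (hφ s hs).continuousAt.continuousWithinAt
  have hF0c : ContinuousOn (F 0) (uIcc a b) := fun s hs =>
    (hF 0 (Nat.zero_le n) s hs).continuousAt.continuousWithinAt
  have hF0p : IntervalIntegrable (fun s => F 0 s * p s) volume a b :=
    (hF0c.mul hp).intervalIntegrable
  have hRi : IntervalIntegrable
      (fun s => F (n + 1) s * (p s * ((φ b - φ s) ^ (n + 1) / ((n + 1).factorial : ℝ))))
      volume a b :=
    hFi.mul_continuousOn (hp.mul (((continuousOn_const.sub hφc).pow _).div_const _))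
  have hFTC := integral_eq_sub_of_hasDerivAt
    (fun s hs => hasDerivAt_sum_mul_pow_sub_div_factorial (c := φ b) n
      (fun k hk => hF k hk s hs) (hφ s hs)) (hRi.sub hF0p)
  have hpow : ∀ k ∈ Finset.range (n + 1), IntervalIntegrable
      (fun t => F k a / (k.factorial : ℝ) * ((φ t - φ a) ^ k * p t)) volume a b :=
    fun k _ => (((hφc.sub continuousOn_const).pow k).mul hp).intervalIntegrable.const_mul _
  calc ∫ t in a..b, (F 0 t - ∑ k ∈ Finset.range (n + 1),
        F k a / (k.factorial : ℝ) * (φ t - φ a) ^ k) * p t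
      = (∫ t in a..b, F 0 t * p t) - ∑ k ∈ Finset.range (n + 1),
          F k a / (k.factorial : ℝ) * ∫ t in a..b, (φ t - φ a) ^ k * p t := by
        simp only [sub_mul, Finset.sum_mul, mul_assoc]
        rw [integral_sub hF0p (by simpa only [Finset.sum_fn] using IntervalIntegrable.sum _ hpow),
          integral_finsetSum hpow]
        simp only [intervalIntegral.integral_const_mul]
    _ = (∫ t in a..b, F 0 t * p t) - ∑ k ∈ Finset.range (n + 1),
          F k a * (φ b - φ a) ^ (k + 1) / ((k + 1).factorial : ℝ) := by
        refine congrArg _ (Finset.sum_congr rfl fun k _ => ?_)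
        rw [hpow_int, Nat.factorial_succ]
        push_cast
        field_simp
    _ = _ := by
        rw [integral_sub hRi hF0p] at hFTC
        simp only [sub_self, zero_pow (Nat.succ_ne_zero _), mul_zero, zero_div,
          Finset.sum_const_zero] at hFTC
        linarith

theorem integral_mul_nonpos_of_monotoneOn_of_antitoneOn {g ρ W : ℝ → ℝ} (hab : a ≤ b)
    (hg : MonotoneOn g (Icc a b)) (hW : AntitoneOn W (Icc a b)) (hWc : ContinuousOn W (Icc a b))
    (hWa : 0 ≤ W a) (hWb : W b ≤ 0) (hρ : ∀ s ∈ Icc a b, 0 ≤ ρ s)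
    (hρc : ContinuousOn ρ (Icc a b)) (hρW : ∫ s in a..b, ρ s * W s = 0) :
    ∫ s in a..b, g s * (ρ s * W s) ≤ 0 := by
  obtain ⟨s₀, hs₀, hW₀⟩ := intermediate_value_Icc' hab hWc ⟨hWb, hWa⟩
  have hsign : ∀ s ∈ Icc a b, (g s - g s₀) * W s ≤ 0 := by
    intro s hs
    rcases le_total s s₀ with h | h
    · exact mul_nonpos_of_nonpos_of_nonneg (sub_nonpos.2 (hg hs hs₀ h)) (hW₀ ▸ hW hs hs₀ h)
    · exact mul_nonpos_of_nonneg_of_nonpos (sub_nonneg.2 (hg hs₀ hs h)) (hW₀ ▸ hW hs₀ hs h)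
  have hρWi : IntervalIntegrable (fun s => ρ s * W s) volume a b :=
    (hρc.mul hWc).intervalIntegrable_of_Icc hab
  have hgi : IntervalIntegrable g volume a b :=
    (uIcc_of_le hab ▸ hg).intervalIntegrable
  calc ∫ s in a..b, g s * (ρ s * W s)
      ≤ ∫ s in a..b, g s₀ * (ρ s * W s) :=
        integral_mono_on hab (hgi.mul_continuousOn (uIcc_of_le hab ▸ hρc.mul hWc))
          (hρWi.const_mul _) fun s hs => by
            nlinarith [mul_nonpos_of_nonneg_of_nonpos (hρ s hs) (hsign s hs)]
    _ = 0 := by rw [intervalIntegral.integral_const_mul, hρW, mul_zero]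

theorem le_integral_mul_sub_of_monotoneOn {g ρ q : ℝ → ℝ} {c : ℝ} (hab : a ≤ b)
    (hg : MonotoneOn g (Icc a b)) (hρ : ∀ s ∈ Icc a b, 0 ≤ ρ s) (hρc : ContinuousOn ρ (Icc a b))
    (hq : ∀ s ∈ Icc a b, 0 ≤ q s) (hqc : ContinuousOn q (Icc a b)) (hc : 0 ≤ c) :
    g a * (∫ s in a..b, ρ s * q s) - g b * (c * ∫ s in a..b, ρ s)
      ≤ ∫ s in a..b, g s * (ρ s * (q s - c)) := by
  have hρqi : IntervalIntegrable (fun s => ρ s * q s) volume a b :=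
    (hρc.mul hqc).intervalIntegrable_of_Icc hab
  have hρi : IntervalIntegrable ρ volume a b := hρc.intervalIntegrable_of_Icc hab
  have hgi : IntervalIntegrable g volume a b :=
    (uIcc_of_le hab ▸ hg).intervalIntegrable
  rw [← intervalIntegral.integral_const_mul, ← intervalIntegral.integral_const_mul,
    ← intervalIntegral.integral_const_mul, ← integral_sub (hρqi.const_mul _)
      ((hρi.const_mul _).const_mul _)]
  refine integral_mono_on hab (((hρqi.const_mul _).sub ((hρi.const_mul _).const_mul _)))
    (hgi.mul_continuousOn (uIcc_of_le hab ▸ hρc.mul (hqc.sub continuousOn_const))) fun s hs => ?_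
  have hga := hg ⟨le_rfl, hab⟩ hs hs.1
  have hgb := hg hs ⟨hab, le_rfl⟩ hs.2
  nlinarith [mul_nonneg (mul_nonneg (hρ s hs) (hq s hs)) (sub_nonneg.2 hga),
    mul_nonneg (mul_nonneg (hρ s hs) hc) (sub_nonneg.2 hgb)]

theorem integral_taylor_remainder_sub_eq (hab : a ≤ b)
    (hφ : ∀ s ∈ Icc a b, HasDerivAt φ (p s) s) (hp : ContinuousOn p (Icc a b))
    {F : ℕ → ℝ → ℝ} {n : ℕ} (hF : ∀ k ≤ n, ∀ s ∈ Icc a b, HasDerivAt (F k) (p s * F (k + 1) s) s)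
    (hFi : IntervalIntegrable (F (n + 1)) volume a b) :
    (∫ t in a..b, (F 0 t - ∑ k ∈ Finset.range (n + 1),
        F k a / (k.factorial : ℝ) * (φ t - φ a) ^ k) * p t)
      - (F n b - F n a) / ((n + 2).factorial : ℝ) * (φ b - φ a) ^ (n + 1)
      = ∫ s in a..b, F (n + 1) s * (p s * ((φ b - φ s) ^ (n + 1) / ((n + 1).factorial : ℝ)
          - (φ b - φ a) ^ (n + 1) / ((n + 2).factorial : ℝ))) := by
  have hpF : ∫ s in a..b, p s * F (n + 1) s = F n b - F n a :=
    integral_eq_sub_of_hasDerivAt (uIcc_of_le hab ▸ hF n le_rfl)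
      (hFi.continuousOn_mul (uIcc_of_le hab ▸ hp))
  have hφc : ContinuousOn φ (Icc a b) := fun s hs => (hφ s hs).continuousAt.continuousWithinAt
  have hQc : ContinuousOn (fun s => (φ b - φ s) ^ (n + 1) / ((n + 1).factorial : ℝ)) (Icc a b) :=
    ((continuousOn_const.sub hφc).pow _).div_const _
  simp only [mul_sub]
  rw [integral_taylor_remainder_mul_deriv hab hφ hp hF hFi,
    integral_sub (hFi.mul_continuousOn (uIcc_of_le hab ▸ hp.mul hQc))
      (hFi.mul_continuousOn (uIcc_of_le hab ▸ hp.mul_const _))]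
  simp only [← mul_assoc, mul_comm (F (n + 1) _) (p _)]
  rw [intervalIntegral.integral_mul_const, hpF]
  ring

theorem taylor_remainder_chebyshev_bounds (hab : a ≤ b)
    (hφ : ∀ s ∈ Icc a b, HasDerivAt φ (p s) s) (hp : ContinuousOn p (Icc a b))
    (hp₀ : ∀ s ∈ Icc a b, 0 ≤ p s) {F : ℕ → ℝ → ℝ} {n : ℕ}
    (hF : ∀ k ≤ n, ∀ s ∈ Icc a b, HasDerivAt (F k) (p s * F (k + 1) s) s)
    (hmono : MonotoneOn (F (n + 1)) (Icc a b)) :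
    (∫ t in a..b, (F 0 t - ∑ k ∈ Finset.range (n + 1),
        F k a / (k.factorial : ℝ) * (φ t - φ a) ^ k) * p t)
      - (F n b - F n a) / ((n + 2).factorial : ℝ) * (φ b - φ a) ^ (n + 1) ≤ 0 ∧
    (F (n + 1) a - F (n + 1) b) / ((n + 2).factorial : ℝ) * (φ b - φ a) ^ (n + 2) ≤
      (∫ t in a..b, (F 0 t - ∑ k ∈ Finset.range (n + 1),
        F k a / (k.factorial : ℝ) * (φ t - φ a) ^ k) * p t)
      - (F n b - F n a) / ((n + 2).factorial : ℝ) * (φ b - φ a) ^ (n + 1) := by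
  set A := φ b - φ a
  set Q : ℝ → ℝ := fun s => (φ b - φ s) ^ (n + 1) / ((n + 1).factorial : ℝ)
  set c := A ^ (n + 1) / ((n + 2).factorial : ℝ)
  have hφc : ContinuousOn φ (Icc a b) := fun s hs => (hφ s hs).continuousAt.continuousWithinAt
  have hφmono : MonotoneOn φ (Icc a b) :=
    monotoneOn_of_hasDerivWithinAt_nonneg (convex_Icc a b) hφc
      (fun s hs => (hφ s (interior_subset hs)).hasDerivWithinAt)
      fun s hs => hp₀ s (interior_subset hs)
  have hQ₀ : ∀ s ∈ Icc a b, 0 ≤ Q s := fun s hs =>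
    div_nonneg (pow_nonneg (sub_nonneg.2 (hφmono hs ⟨hab, le_rfl⟩ hs.2)) _) (Nat.cast_nonneg _)
  have hQc : ContinuousOn Q (Icc a b) := ((continuousOn_const.sub hφc).pow _).div_const _
  have hQanti : AntitoneOn Q (Icc a b) := fun s hs t ht hst => by
    have hφst := hφmono hs ht hst
    have hφt := hφmono ht ⟨hab, le_rfl⟩ ht.2
    simp only [Q]
    gcongr
  have hA₀ : 0 ≤ A := sub_nonneg.2 (hφmono ⟨le_rfl, hab⟩ ⟨hab, le_rfl⟩ hab)
  have hc₀ : 0 ≤ c := by positivity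
  have hWa : 0 ≤ Q a - c := by
    rw [sub_nonneg]
    show A ^ (n + 1) / _ ≤ A ^ (n + 1) / _
    gcongr
    omega
  have hWb : Q b - c ≤ 0 := by simp [Q, hc₀]
  have hpQ : ∫ s in a..b, p s * Q s = A ^ (n + 2) / ((n + 2).factorial : ℝ) :=
    integral_mul_pow_sub_div_factorial hab hφ hp (n + 1)
  have hpc : c * ∫ s in a..b, p s = A ^ (n + 2) / ((n + 2).factorial : ℝ) := by
    rw [integral_eq_sub_of_hasDerivAt (uIcc_of_le hab ▸ hφ) (hp.intervalIntegrable_of_Icc hab),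
      pow_succ]
    ring
  have hpW : ∫ s in a..b, p s * (Q s - c) = 0 := by
    have hpQi : IntervalIntegrable (fun s => p s * Q s) volume a b :=
      (hp.mul hQc).intervalIntegrable_of_Icc hab
    simp only [mul_sub]
    rw [integral_sub hpQi ((hp.intervalIntegrable_of_Icc hab).mul_const c),
      intervalIntegral.integral_mul_const, hpQ, mul_comm, hpc, sub_self]
  have hlow := le_integral_mul_sub_of_monotoneOn hab hmono hp₀ hp hQ₀ hQc hc₀
  rw [hpQ, hpc] at hlow
  rw [integral_taylor_remainder_sub_eq hab hφ hp hF ((uIcc_of_le hab ▸ hmono).intervalIntegrable)]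
  exact ⟨integral_mul_nonpos_of_monotoneOn_of_antitoneOn hab hmono
      (fun s hs t ht hst => sub_le_sub_right (hQanti hs ht hst) c) (hQc.sub continuousOn_const)
      hWa hWb hp₀ hp hpW,
    le_of_eq_of_le (by ring) hlow⟩

end

theorem hasDerivAt_rpow_mul_condD {α s : ℝ} {g : ℝ → ℝ} (hs : 0 < s)
    (hg : DifferentiableAt ℝ g s) : HasDerivAt g (s ^ (α - 1) * condD α g s) s := by
  rw [condD, ← mul_assoc, ← Real.rpow_add hs, sub_add_sub_cancel', sub_self, Real.rpow_zero,
    one_mul]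
  exact hg.hasDerivAt

theorem remainder_chebyshev_bounds_general (α a b : ℝ) (hα : 0 < α ∧ α ≤ 1)
    (ha : 0 < a) (hab : a < b) (n : ℕ) (f : ℝ → ℝ)
    (hdiff : ∀ k ≤ n, ∀ x ∈ Icc a b, DifferentiableAt ℝ ((condD α)^[k] f) x)
    (hinc : MonotoneOn ((condD α)^[n+1] f) (Icc a b)) :
    0 ≥ (∫ t in a..b, taylorRem α f n a t * t ^ (α - 1))
        - (((condD α)^[n] f b - (condD α)^[n] f a) / ((n+2).factorial : ℝ)) *
          ((b ^ α - a ^ α) / α) ^ (n+1) ∧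
    (∫ t in a..b, taylorRem α f n a t * t ^ (α - 1))
        - (((condD α)^[n] f b - (condD α)^[n] f a) / ((n+2).factorial : ℝ)) *
          ((b ^ α - a ^ α) / α) ^ (n+1) ≥
      (((condD α)^[n+1] f a - (condD α)^[n+1] f b) / ((n+2).factorial : ℝ)) *
        ((b ^ α - a ^ α) / α) ^ (n+2) := by
  have hpos : ∀ s ∈ Icc a b, 0 < s := fun s hs => ha.trans_le hs.1
  have hφ : ∀ s ∈ Icc a b, HasDerivAt (fun s => s ^ α / α) (s ^ (α - 1)) s := fun s hs =>
    ((Real.hasDerivAt_rpow_const (Or.inl (hpos s hs).ne')).div_const α).congr_deriv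
      (mul_div_cancel_left₀ _ hα.1.ne')
  have hp : ContinuousOn (fun s : ℝ => s ^ (α - 1)) (Icc a b) := fun s hs =>
    (Real.continuousAt_rpow_const s _ (Or.inl (hpos s hs).ne')).continuousWithinAt
  have hF : ∀ k ≤ n, ∀ s ∈ Icc a b,
      HasDerivAt ((condD α)^[k] f) (s ^ (α - 1) * (condD α)^[k + 1] f s) s := fun k hk s hs => by
    rw [Function.iterate_succ_apply']
    exact hasDerivAt_rpow_mul_condD (hpos s hs) (hdiff k hk s hs)
  have h := taylor_remainder_chebyshev_bounds hab.le hφ hp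
    (fun s hs => Real.rpow_nonneg (hpos s hs).le _) (F := fun k => (condD α)^[k] f) hF hinc
  simpa only [taylorRem, ge_iff_le, ← sub_div, Function.iterate_zero_apply] using h

/-- Čebyšev-type bounds on the α-fractional Taylor remainder when
`D_α^{n+1} f` is increasing. -/
theorem remainder_chebyshev_bounds (α a b : ℝ) (hα : 0 < α ∧ α ≤ 1)
    (ha : 0 < a) (hab : a < b) (n : ℕ) (f : ℝ → ℝ)
    (hdiff : ∀ k ≤ n, ∀ x ∈ Icc a b, DifferentiableAt ℝ ((condD α)^[k] f) x)
    (hinc : MonotoneOn ((condD α)^[n+1] f) (Icc a b))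
    (hint : IntervalIntegrable (fun t => taylorRem α f n a t * t ^ (α - 1)) volume a b) :
    0 ≥ (∫ t in a..b, taylorRem α f n a t * t ^ (α - 1))
        - (((condD α)^[n] f b - (condD α)^[n] f a) / ((n+2).factorial : ℝ)) *
          ((b ^ α - a ^ α) / α) ^ (n+1) ∧
    (∫ t in a..b, taylorRem α f n a t * t ^ (α - 1))
        - (((condD α)^[n] f b - (condD α)^[n] f a) / ((n+2).factorial : ℝ)) *
          ((b ^ α - a ^ α) / α) ^ (n+1) ≥
      (((condD α)^[n+1] f a - (condD α)^[n+1] f b) / ((n+2).factorial : ℝ)) *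
        ((b ^ α - a ^ α) / α) ^ (n+2) :=
  remainder_chebyshev_bounds_general α a b hα ha hab n f hdiff hinc
end

section
/- Ostrowski inequality: Let α ∈ (0,1], 0 ≤ a < b, f : [a,b] → ℝ be α-fractional differentiable, and M := sup_{t∈(a,b)} |D_α f(t)| < ∞. Then for all t ∈ [a,b]: |f(t) − (α/(b^α − a^α))·∫_a^b f(s) s^{α−1} ds| ≤ (M/(2α(b^α − a^α)))·[(t^α − a^α)^2 + (b^α − t^α)^2]. -/
open Set MeasureTheory intervalIntegral

/-!
Since `f' s = s ^ (α - 1) * D_α f s`, the bound `|D_α f| ≤ M` says `|f'| ≤ (M / α * s ^ α)'` on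
`(a, b)`, so `M / α * s ^ α ∓ f` are monotone and `|f t - f s| ≤ M / α * |t ^ α - s ^ α|`. The
weights `s ^ (α - 1)` have total mass `(b ^ α - a ^ α) / α`, so the left-hand side is the weighted
mean of `f t - f s`, and it remains to compute `∫ₐᵇ |t ^ α - s ^ α| s ^ (α - 1) ds`, using the
antiderivative `(s ^ α - t ^ α) ^ 2 / (2 α)` on either side of `t`.
-/

theorem abs_sub_le_sub_of_abs_deriv_le {f g : ℝ → ℝ} {a b : ℝ} (hab : a ≤ b)
    (hf : ContinuousOn f (Icc a b)) (hg : ContinuousOn g (Icc a b))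
    (hf' : DifferentiableOn ℝ f (Ioo a b)) (hg' : DifferentiableOn ℝ g (Ioo a b))
    (hle : ∀ x ∈ Ioo a b, |deriv f x| ≤ deriv g x) :
    |f b - f a| ≤ g b - g a := by
  have hdf : ∀ x ∈ Ioo a b, DifferentiableAt ℝ f x := fun x hx =>
    hf'.differentiableAt (Ioo_mem_nhds hx.1 hx.2)
  have hdg : ∀ x ∈ Ioo a b, DifferentiableAt ℝ g x := fun x hx =>
    hg'.differentiableAt (Ioo_mem_nhds hx.1 hx.2)
  have hsub : MonotoneOn (fun x => g x - f x) (Icc a b) := by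
    refine monotoneOn_of_deriv_nonneg (convex_Icc a b) (hg.sub hf)
      (by rw [interior_Icc]; exact hg'.sub hf') fun x hx => ?_
    rw [interior_Icc] at hx
    rw [deriv_fun_sub (hdg x hx) (hdf x hx)]
    linarith [le_abs_self (deriv f x), hle x hx]
  have hadd : MonotoneOn (fun x => g x + f x) (Icc a b) := by
    refine monotoneOn_of_deriv_nonneg (convex_Icc a b) (hg.add hf)
      (by rw [interior_Icc]; exact hg'.add hf') fun x hx => ?_
    rw [interior_Icc] at hx
    rw [deriv_fun_add (hdg x hx) (hdf x hx)]
    linarith [neg_abs_le (deriv f x), hle x hx]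
  have ha : a ∈ Icc a b := left_mem_Icc.2 hab
  have hb : b ∈ Icc a b := right_mem_Icc.2 hab
  have h₁ := hsub ha hb hab
  have h₂ := hadd ha hb hab
  simp only at h₁ h₂
  exact abs_le.2 ⟨by linarith, by linarith⟩

theorem deriv_eq_rpow_mul_condD {α x : ℝ} (f : ℝ → ℝ) (hx : 0 < x) :
    deriv f x = x ^ (α - 1) * condD α f x := by
  rw [condD, ← mul_assoc, ← Real.rpow_add hx]
  norm_num

theorem abs_sub_le_of_abs_condD_le {α a b M : ℝ} {f : ℝ → ℝ} (hα : 0 < α) (ha : 0 ≤ a)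
    (hab : a ≤ b) (hf : ContinuousOn f (Icc a b)) (hf' : DifferentiableOn ℝ f (Ioo a b))
    (hM : ∀ x ∈ Ioo a b, |condD α f x| ≤ M) :
    |f b - f a| ≤ M / α * (b ^ α - a ^ α) := by
  have hpow : Continuous fun x : ℝ => M / α * x ^ α :=
    continuous_const.mul (continuous_id.rpow_const fun _ => Or.inr hα.le)
  have hderiv : ∀ x ∈ Ioo a b, HasDerivAt (fun x : ℝ => M / α * x ^ α) (M * x ^ (α - 1)) x := by
    intro x hx
    refine ((Real.hasDerivAt_rpow_const (Or.inl (ha.trans_lt hx.1).ne')).const_mul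
      (M / α)).congr_deriv ?_
    field_simp
  rw [mul_sub]
  refine abs_sub_le_sub_of_abs_deriv_le hab hf hpow.continuousOn hf'
    (fun x hx => (hderiv x hx).differentiableAt.differentiableWithinAt) fun x hx => ?_
  have hx0 : 0 < x := ha.trans_lt hx.1
  rw [(hderiv x hx).deriv, deriv_eq_rpow_mul_condD f hx0, abs_mul,
    abs_of_pos (Real.rpow_pos_of_pos hx0 _), mul_comm M]
  exact mul_le_mul_of_nonneg_left (hM x hx) (Real.rpow_nonneg hx0.le _)

theorem abs_sub_le_of_abs_condD_le_of_mem_Icc {α a b M : ℝ} {f : ℝ → ℝ} (hα : 0 < α)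
    (ha : 0 ≤ a) (hf : ContinuousOn f (Icc a b)) (hf' : DifferentiableOn ℝ f (Ioo a b))
    (hM : ∀ x ∈ Ioo a b, |condD α f x| ≤ M) {s t : ℝ} (hs : s ∈ Icc a b) (ht : t ∈ Icc a b) :
    |f t - f s| ≤ M / α * |t ^ α - s ^ α| := by
  wlog hst : s ≤ t generalizing s t
  · rw [abs_sub_comm, abs_sub_comm (t ^ α)]
    exact this ht hs (le_of_not_ge hst)
  have hsub : Icc s t ⊆ Icc a b := Icc_subset_Icc hs.1 ht.2
  rw [abs_of_nonneg (sub_nonneg.2 (Real.rpow_le_rpow (ha.trans hs.1) hst hα.le))]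
  exact abs_sub_le_of_abs_condD_le hα (ha.trans hs.1) hst (hf.mono hsub)
    (hf'.mono (Ioo_subset_Ioo hs.1 ht.2)) fun x hx => hM x (Ioo_subset_Ioo hs.1 ht.2 hx)

theorem intervalIntegrable_mul_rpow_sub_one {α a b : ℝ} {g : ℝ → ℝ} (hα : 0 < α)
    (hg : ContinuousOn g (uIcc a b)) :
    IntervalIntegrable (fun s => g s * s ^ (α - 1)) volume a b :=
  (intervalIntegrable_rpow' (by linarith)).continuousOn_mul hg

theorem integral_rpow_sub_mul_rpow_sub_one {α c d K : ℝ} (hα : 0 < α) (hc : 0 ≤ c)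
    (hcd : c ≤ d) :
    ∫ s in c..d, (s ^ α - K) * s ^ (α - 1) = ((d ^ α - K) ^ 2 - (c ^ α - K) ^ 2) / (2 * α) := by
  have hg : Continuous fun s : ℝ => s ^ α - K :=
    (continuous_id.rpow_const fun _ => Or.inr hα.le).sub continuous_const
  rw [sub_div, integral_eq_sub_of_hasDerivAt_of_le (f := fun s => (s ^ α - K) ^ 2 / (2 * α)) hcd
    ((hg.pow 2).div_const _).continuousOn _ (intervalIntegrable_mul_rpow_sub_one hα hg.continuousOn)]
  intro x hx
  refine ((((Real.hasDerivAt_rpow_const (Or.inl (hc.trans_lt hx.1).ne')).sub_const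
    K).fun_pow 2).div_const (2 * α)).congr_deriv ?_
  norm_num
  field_simp

theorem integral_abs_rpow_sub_mul_rpow_sub_one {α a b t : ℝ} (hα : 0 < α) (ha : 0 ≤ a)
    (ht : t ∈ Icc a b) :
    ∫ s in a..b, |t ^ α - s ^ α| * s ^ (α - 1) =
      ((t ^ α - a ^ α) ^ 2 + (b ^ α - t ^ α) ^ 2) / (2 * α) := by
  have hcont : Continuous fun s : ℝ => |t ^ α - s ^ α| :=
    (continuous_const.sub (continuous_id.rpow_const fun _ => Or.inr hα.le)).abs
  have hleft : ∫ s in a..t, |t ^ α - s ^ α| * s ^ (α - 1) =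
      -∫ s in a..t, (s ^ α - t ^ α) * s ^ (α - 1) := by
    rw [← intervalIntegral.integral_neg]
    refine integral_congr fun s hs => ?_
    rw [uIcc_of_le ht.1] at hs
    rw [abs_of_nonneg (sub_nonneg.2 (Real.rpow_le_rpow (ha.trans hs.1) hs.2 hα.le))]
    ring
  have hright : ∫ s in t..b, |t ^ α - s ^ α| * s ^ (α - 1) =
      ∫ s in t..b, (s ^ α - t ^ α) * s ^ (α - 1) := by
    refine integral_congr fun s hs => ?_
    rw [uIcc_of_le ht.2] at hs
    rw [abs_sub_comm, abs_of_nonneg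
      (sub_nonneg.2 (Real.rpow_le_rpow (ha.trans ht.1) hs.1 hα.le))]
  rw [← integral_add_adjacent_intervals (intervalIntegrable_mul_rpow_sub_one hα hcont.continuousOn)
    (intervalIntegrable_mul_rpow_sub_one hα hcont.continuousOn), hleft, hright,
    integral_rpow_sub_mul_rpow_sub_one hα ha ht.1,
    integral_rpow_sub_mul_rpow_sub_one hα (ha.trans ht.1) ht.2]
  ring

theorem sub_mul_integral_mul_rpow_sub_one {α a b c : ℝ} {f : ℝ → ℝ} (hα : 0 < α) (ha : 0 ≤ a)
    (hab : a < b) (hf : ContinuousOn f (Icc a b)) :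
    c - α / (b ^ α - a ^ α) * ∫ s in a..b, f s * s ^ (α - 1) =
      α / (b ^ α - a ^ α) * ∫ s in a..b, (c - f s) * s ^ (α - 1) := by
  have hA : b ^ α - a ^ α ≠ 0 := (sub_pos.2 (Real.rpow_lt_rpow ha hab hα)).ne'
  simp only [sub_mul]
  rw [integral_sub (intervalIntegrable_mul_rpow_sub_one hα continuousOn_const)
    (intervalIntegrable_mul_rpow_sub_one hα (by rwa [uIcc_of_le hab.le])),
    intervalIntegral.integral_const_mul, integral_rpow (Or.inl (by linarith)), sub_add_cancel]
  field_simp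

theorem abs_integral_sub_mul_rpow_sub_one_le {α a b M t : ℝ} {f : ℝ → ℝ} (hα : 0 < α)
    (ha : 0 ≤ a) (hab : a ≤ b) (hf : ContinuousOn f (Icc a b))
    (hf' : DifferentiableOn ℝ f (Ioo a b)) (hM : ∀ x ∈ Ioo a b, |condD α f x| ≤ M)
    (ht : t ∈ Icc a b) :
    |∫ s in a..b, (f t - f s) * s ^ (α - 1)| ≤
      M / α * (((t ^ α - a ^ α) ^ 2 + (b ^ α - t ^ α) ^ 2) / (2 * α)) := by
  have hdist : Continuous fun s : ℝ => |t ^ α - s ^ α| :=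
    (continuous_const.sub (continuous_id.rpow_const fun _ => Or.inr hα.le)).abs
  rw [← integral_abs_rpow_sub_mul_rpow_sub_one hα ha ht, ← intervalIntegral.integral_const_mul,
    ← Real.norm_eq_abs]
  refine norm_integral_le_of_norm_le hab (ae_of_all _ fun s hs => ?_)
    ((intervalIntegrable_mul_rpow_sub_one hα hdist.continuousOn).const_mul _)
  have hs0 : 0 ≤ s := ha.trans hs.1.le
  rw [Real.norm_eq_abs, abs_mul, abs_of_nonneg (Real.rpow_nonneg hs0 _), ← mul_assoc]
  exact mul_le_mul_of_nonneg_right (abs_sub_le_of_abs_condD_le_of_mem_Icc hα ha hf hf' hM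
    (Ioc_subset_Icc_self hs) ht) (Real.rpow_nonneg hs0 _)

theorem ostrowski_fractional_general (α a b M : ℝ) (hα : 0 < α ∧ α ≤ 1)
    (ha : 0 ≤ a) (hab : a < b) (f : ℝ → ℝ)
    (hdiff : ∀ x ∈ Icc a b, DifferentiableAt ℝ f x)
    (hM : IsLUB ((fun s => |condD α f s|) '' Ioo a b) M)
    (t : ℝ) (ht : t ∈ Icc a b) :
    |f t - (α / (b ^ α - a ^ α)) * ∫ s in a..b, f s * s ^ (α - 1)| ≤
      (M / (2 * α * (b ^ α - a ^ α))) *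
        ((t ^ α - a ^ α) ^ 2 + (b ^ α - t ^ α) ^ 2) := by
  obtain ⟨hα, -⟩ := hα
  have hf : ContinuousOn f (Icc a b) := fun x hx => (hdiff x hx).continuousAt.continuousWithinAt
  have hf' : DifferentiableOn ℝ f (Ioo a b) := fun x hx =>
    (hdiff x (Ioo_subset_Icc_self hx)).differentiableWithinAt
  have hbound : ∀ x ∈ Ioo a b, |condD α f x| ≤ M := fun x hx => hM.1 (mem_image_of_mem _ hx)
  have hA : 0 < b ^ α - a ^ α := sub_pos.2 (Real.rpow_lt_rpow ha hab hα)
  rw [sub_mul_integral_mul_rpow_sub_one hα ha hab hf, abs_mul, abs_of_pos (div_pos hα hA)]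
  calc α / (b ^ α - a ^ α) * |∫ s in a..b, (f t - f s) * s ^ (α - 1)|
      ≤ α / (b ^ α - a ^ α) *
          (M / α * (((t ^ α - a ^ α) ^ 2 + (b ^ α - t ^ α) ^ 2) / (2 * α))) := by
        gcongr
        exact abs_integral_sub_mul_rpow_sub_one_le hα ha hab.le hf hf' hbound ht
    _ = M / (2 * α * (b ^ α - a ^ α)) * ((t ^ α - a ^ α) ^ 2 + (b ^ α - t ^ α) ^ 2) := by
        field_simp

/-- Ostrowski inequality for conformable fractional derivatives, where
`M` is the supremum of `|D_α f|` on `(a,b)`. -/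
theorem ostrowski_fractional (α a b M : ℝ) (hα : 0 < α ∧ α ≤ 1)
    (ha : 0 ≤ a) (hab : a < b) (f : ℝ → ℝ)
    (hdiff : ∀ x ∈ Icc a b, DifferentiableAt ℝ f x)
    (hint : IntervalIntegrable (fun s => f s * s ^ (α - 1)) volume a b)
    (hM : IsLUB ((fun s => |condD α f s|) '' Ioo a b) M)
    (t : ℝ) (ht : t ∈ Icc a b) :
    |f t - (α / (b ^ α - a ^ α)) * ∫ s in a..b, f s * s ^ (α - 1)| ≤
      (M / (2 * α * (b ^ α - a ^ α))) *
        ((t ^ α - a ^ α) ^ 2 + (b ^ α - t ^ α) ^ 2) :=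
  ostrowski_fractional_general α a b M hα ha hab f hdiff hM t ht
end

section
/- Grüss inequality for α-fractional integrals: Let α ∈ (0,1], 0 ≤ a < b, and f, g : [a,b] → ℝ continuous with m₁ ≤ f(t) ≤ M₁ and m₂ ≤ g(t) ≤ M₂ on [a,b]. Then |(α/(b^α − a^α))·∫_a^b f(t)g(t) t^{α−1} dt − (α/(b^α − a^α))²·(∫_a^b f(t) t^{α−1} dt)·(∫_a^b g(t) t^{α−1} dt)| ≤ (1/4)(M₁ − m₁)(M₂ − m₂). -/
/-!
Normalising the weight `t ^ (α - 1)` on `(a, b]` gives a probability measure `ν`, under which the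
left-hand side is exactly the covariance of `f` and `g`. Cauchy–Schwarz bounds `cov[f, g; ν] ^ 2`
by `Var[f; ν] * Var[g; ν]`, and Popoviciu's inequality bounds each variance by the square of half
the range.
-/

open Set MeasureTheory intervalIntegral ProbabilityTheory

namespace ProbabilityTheory

variable {Ω : Type*} {mΩ : MeasurableSpace Ω} {μ : Measure Ω} {X Y : Ω → ℝ}

lemma sq_covariance_le_variance_mul_variance [IsFiniteMeasure μ] (hX : MemLp X 2 μ)
    (hY : MemLp Y 2 μ) : cov[X, Y; μ] ^ 2 ≤ Var[X; μ] * Var[Y; μ] := by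
  have h := discrim_le_zero (a := Var[Y; μ]) (b := 2 * cov[X, Y; μ]) (c := Var[X; μ])
    fun t ↦ by
      have := variance_nonneg (X + t • Y) μ
      rw [variance_add hX (hY.const_smul t), covariance_smul_right, variance_smul] at this
      linarith
  rw [discrim] at h
  linarith

lemma abs_covariance_le_of_bounded [IsProbabilityMeasure μ] {m₁ M₁ m₂ M₂ : ℝ}
    (hXb : ∀ᵐ ω ∂μ, X ω ∈ Icc m₁ M₁) (hYb : ∀ᵐ ω ∂μ, Y ω ∈ Icc m₂ M₂)
    (hX : AEStronglyMeasurable X μ) (hY : AEStronglyMeasurable Y μ) :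
    |cov[X, Y; μ]| ≤ (M₁ - m₁) * (M₂ - m₂) / 4 := by
  obtain ⟨ω, hXω, hYω⟩ := (hXb.and hYb).exists
  have hVX := variance_le_sq_of_bounded hXb hX.aemeasurable
  have hVY := variance_le_sq_of_bounded hYb hY.aemeasurable
  refine abs_le_of_sq_le_sq ?_ (by nlinarith [hXω.1, hXω.2, hYω.1, hYω.2])
  calc cov[X, Y; μ] ^ 2 ≤ Var[X; μ] * Var[Y; μ] :=
        sq_covariance_le_variance_mul_variance (memLp_of_bounded hXb hX 2)
          (memLp_of_bounded hYb hY 2)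
    _ ≤ ((M₁ - m₁) / 2) ^ 2 * ((M₂ - m₂) / 2) ^ 2 :=
        mul_le_mul hVX hVY (variance_nonneg _ _) (sq_nonneg _)
    _ = ((M₁ - m₁) * (M₂ - m₂) / 4) ^ 2 := by ring

end ProbabilityTheory

/-- `α / (b ^ α - a ^ α)` is the reciprocal of `∫ t in a..b, t ^ (α - 1)`. -/
noncomputable def fractionalMeasure (α a b : ℝ) : Measure ℝ :=
  (volume.restrict (Ioc a b)).withDensity fun t ↦
    ENNReal.ofReal (α / (b ^ α - a ^ α) * t ^ (α - 1))

section fractionalMeasure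

variable {α a b : ℝ}

lemma integral_fractionalMeasure (hα : 0 ≤ α) (ha : 0 ≤ a) (hab : a ≤ b) (h : ℝ → ℝ) :
    ∫ t, h t ∂fractionalMeasure α a b =
      α / (b ^ α - a ^ α) * ∫ t in a..b, h t * t ^ (α - 1) := by
  rw [fractionalMeasure, integral_withDensity_eq_integral_toReal_smul (by fun_prop)
    (ae_of_all _ fun _ ↦ ENNReal.ofReal_lt_top), integral_of_le hab,
    ← MeasureTheory.integral_const_mul]
  refine setIntegral_congr_fun measurableSet_Ioc fun t ht ↦ ?_
  have hw : 0 ≤ α / (b ^ α - a ^ α) * t ^ (α - 1) :=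
    mul_nonneg (div_nonneg hα (sub_nonneg.2 (Real.rpow_le_rpow ha hab hα)))
      (Real.rpow_nonneg (ha.trans ht.1.le) _)
  simp only [ENNReal.toReal_ofReal hw, smul_eq_mul]
  ring

lemma isProbabilityMeasure_fractionalMeasure (hα : 0 < α) (ha : 0 ≤ a) (hab : a < b) :
    IsProbabilityMeasure (fractionalMeasure α a b) := by
  have hK : b ^ α - a ^ α ≠ 0 := (sub_pos.2 (Real.rpow_lt_rpow ha hab hα)).ne'
  have h := integral_fractionalMeasure hα.le ha hab.le fun _ ↦ 1
  simp only [one_mul, MeasureTheory.integral_const, smul_eq_mul, mul_one] at h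
  rw [integral_rpow (Or.inl (by linarith)), sub_add_cancel] at h
  refine ⟨ENNReal.toReal_eq_one_iff _ |>.1 ?_⟩
  rw [← measureReal_def, h]
  field_simp

lemma fractionalMeasure_absolutelyContinuous :
    fractionalMeasure α a b ≪ volume.restrict (Ioc a b) :=
  withDensity_absolutelyContinuous _ _

end fractionalMeasure

/-- Grüss inequality for α-fractional integrals. -/
theorem gruss_fractional (α a b m₁ M₁ m₂ M₂ : ℝ) (hα : 0 < α ∧ α ≤ 1)
    (ha : 0 ≤ a) (hab : a < b) (f g : ℝ → ℝ)
    (hf : ContinuousOn f (Icc a b)) (hg : ContinuousOn g (Icc a b))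
    (hfb : ∀ t ∈ Icc a b, m₁ ≤ f t ∧ f t ≤ M₁)
    (hgb : ∀ t ∈ Icc a b, m₂ ≤ g t ∧ g t ≤ M₂) :
    |(α / (b ^ α - a ^ α)) * (∫ t in a..b, f t * g t * t ^ (α - 1))
        - (α / (b ^ α - a ^ α)) ^ 2 * (∫ t in a..b, f t * t ^ (α - 1)) *
          ∫ t in a..b, g t * t ^ (α - 1)| ≤
      (1 / 4) * (M₁ - m₁) * (M₂ - m₂) := by
  have := isProbabilityMeasure_fractionalMeasure hα.1 ha hab
  have hmeas {φ : ℝ → ℝ} (hφ : ContinuousOn φ (Icc a b)) :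
      AEStronglyMeasurable φ (fractionalMeasure α a b) :=
    ((hφ.mono Ioc_subset_Icc_self).aestronglyMeasurable measurableSet_Ioc).mono_ac
      fractionalMeasure_absolutelyContinuous
  have hbound {φ : ℝ → ℝ} {m M : ℝ} (hφ : ∀ t ∈ Icc a b, m ≤ φ t ∧ φ t ≤ M) :
      ∀ᵐ t ∂fractionalMeasure α a b, φ t ∈ Icc m M :=
    fractionalMeasure_absolutelyContinuous.ae_le <| ae_restrict_of_forall_mem measurableSet_Ioc
      fun t ht ↦ hφ t (Ioc_subset_Icc_self ht)
  have hcov := abs_covariance_le_of_bounded (hbound hfb) (hbound hgb) (hmeas hf) (hmeas hg)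
  rw [covariance_eq_sub (memLp_of_bounded (hbound hfb) (hmeas hf) 2)
    (memLp_of_bounded (hbound hgb) (hmeas hg) 2)] at hcov
  simp only [Pi.mul_apply, integral_fractionalMeasure hα.1.le ha hab.le] at hcov
  convert hcov using 2 <;> ring
end

section
/- Let α ∈ (0,1], 0 ≤ a < b, f : [a,b] → ℝ be α-fractional differentiable with D_α f continuous and m ≤ D_α f(t) ≤ M on [a,b]. Then for all t ∈ [a,b]: |f(t) − (α/(b^α − a^α))·∫_a^b f(s) s^{α−1} ds − ((2t^α − a^α − b^α)/(2(b^α − a^α)))·(f(b) − f(a))| ≤ (1/4)·((b^α − a^α)/α)·(M − m). -/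
open Set MeasureTheory intervalIntegral

private lemma w_int {α : ℝ} (hα : 0 < α) (p q : ℝ) :
    IntervalIntegrable (fun s : ℝ => s ^ (α - 1)) volume p q :=
  intervalIntegral.intervalIntegrable_rpow' (by linarith)

private lemma cw_int {α : ℝ} (hα : 0 < α) {p q : ℝ} {φ : ℝ → ℝ}
    (hφ : ContinuousOn φ (Set.uIcc p q)) :
    IntervalIntegrable (fun s : ℝ => φ s * s ^ (α - 1)) volume p q :=
  (w_int hα p q).continuousOn_mul hφ

private lemma Qderiv {α : ℝ} (hα : 0 < α) {x : ℝ} (hx : 0 < x) (r c : ℝ) :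
    HasDerivAt (fun y : ℝ => (y ^ α - r) / α - c) (x ^ (α - 1)) x := by
  have h := (((Real.hasDerivAt_rpow_const (p := α) (Or.inl hx.ne')).sub_const r).div_const α).sub_const c
  have h2 : α * x ^ (α - 1) / α = x ^ (α - 1) := by
    field_simp
  rwa [h2] at h

private lemma condD_mul {α : ℝ} (f : ℝ → ℝ) {x : ℝ} (hx : 0 < x) :
    condD α f x * x ^ (α - 1) = deriv f x := by
  have h1 : x ^ (1 - α) * x ^ (α - 1) = 1 := by
    rw [← Real.rpow_add hx]; norm_num
  unfold condD
  calc x ^ (1 - α) * deriv f x * x ^ (α - 1)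
      = x ^ (1 - α) * x ^ (α - 1) * deriv f x := by ring
    _ = deriv f x := by rw [h1, one_mul]

private lemma ftc1 {α : ℝ} (hα : 0 < α) {f : ℝ → ℝ} {p q : ℝ} (r c : ℝ) (hp : 0 ≤ p) (hpq : p ≤ q)
    (hd : ∀ x ∈ Icc p q, DifferentiableAt ℝ f x)
    (hg : ContinuousOn (condD α f) (Icc p q)) :
    ∫ s in p..q, (((s ^ α - r) / α - c) * condD α f s + f s) * s ^ (α - 1)
      = ((q ^ α - r) / α - c) * f q - ((p ^ α - r) / α - c) * f p := by
  have huIcc : uIcc p q = Icc p q := uIcc_of_le hpq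
  have hfc : ContinuousOn f (Icc p q) := fun x hx => ((hd x hx).continuousAt).continuousWithinAt
  have hQc : Continuous (fun x : ℝ => (x ^ α - r) / α - c) :=
    (((Real.continuous_rpow_const hα.le).sub continuous_const).div_const α).sub continuous_const
  have hint : IntervalIntegrable
      (fun s => (((s ^ α - r) / α - c) * condD α f s + f s) * s ^ (α - 1)) volume p q := by
    apply cw_int hα
    rw [huIcc]
    exact (hQc.continuousOn.mul hg).add hfc
  have hcont' : ContinuousOn (fun x => ((x ^ α - r) / α - c) * f x) (Icc p q) :=
    hQc.continuousOn.mul hfc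
  have key : ∀ x ∈ Ioo p q, HasDerivWithinAt (fun x => ((x ^ α - r) / α - c) * f x)
      ((((x ^ α - r) / α - c) * condD α f x + f x) * x ^ (α - 1)) (Ioi x) x := by
    intro x hx
    have hx0 : 0 < x := lt_of_le_of_lt hp hx.1
    have h3 := (Qderiv hα hx0 r c).mul ((hd x ⟨hx.1.le, hx.2.le⟩).hasDerivAt)
    have heq : x ^ (α - 1) * f x + ((x ^ α - r) / α - c) * deriv f x
        = (((x ^ α - r) / α - c) * condD α f x + f x) * x ^ (α - 1) := by
      rw [add_mul, mul_assoc, condD_mul f hx0]; ring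
    rw [heq] at h3
    exact h3.hasDerivWithinAt
  exact intervalIntegral.integral_eq_sub_of_hasDeriv_right_of_le hpq hcont' key hint

private lemma ftc2 {α : ℝ} (hα : 0 < α) {p q : ℝ} (r c : ℝ) (hp : 0 ≤ p) (hpq : p ≤ q) :
    ∫ s in p..q, ((s ^ α - r) / α - c) * s ^ (α - 1)
      = ((q ^ α - r) / α - c) * ((q ^ α - r) / α - c) / 2
        - ((p ^ α - r) / α - c) * ((p ^ α - r) / α - c) / 2 := by
  have hQc : Continuous (fun x : ℝ => (x ^ α - r) / α - c) :=
    (((Real.continuous_rpow_const hα.le).sub continuous_const).div_const α).sub continuous_const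
  have hint : IntervalIntegrable (fun s : ℝ => ((s ^ α - r) / α - c) * s ^ (α - 1)) volume p q :=
    cw_int hα hQc.continuousOn
  have key : ∀ x ∈ Ioo p q, HasDerivWithinAt
      (fun x : ℝ => ((x ^ α - r) / α - c) * ((x ^ α - r) / α - c) / 2)
      (((x ^ α - r) / α - c) * x ^ (α - 1)) (Ioi x) x := by
    intro x hx
    have hx0 : 0 < x := lt_of_le_of_lt hp hx.1
    have h3 := ((Qderiv hα hx0 r c).mul (Qderiv hα hx0 r c)).div_const 2
    have heq : (x ^ (α - 1) * ((x ^ α - r) / α - c) + ((x ^ α - r) / α - c) * x ^ (α - 1)) / 2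
        = ((x ^ α - r) / α - c) * x ^ (α - 1) := by ring
    rw [heq] at h3
    exact h3.hasDerivWithinAt
  exact intervalIntegral.integral_eq_sub_of_hasDeriv_right_of_le hpq
    ((hQc.continuousOn.mul hQc.continuousOn).div_const 2) key hint
private lemma interval_bound {α m M r c K : ℝ} (hα : 0 < α) {g : ℝ → ℝ} {p q : ℝ}
    (hp : 0 ≤ p) (hpq : p ≤ q)
    (hgc : ContinuousOn g (Icc p q))
    (hbd : ∀ s ∈ Icc p q, m ≤ g s ∧ g s ≤ M)
    (hK : 0 ≤ K)
    (hlo : -K ≤ (p ^ α - r) / α - c)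
    (hhi : (q ^ α - r) / α - c ≤ K) :
    |∫ s in p..q, ((s ^ α - r) / α - c) * (g s - (m + M) / 2) * s ^ (α - 1)|
      ≤ K * ((M - m) / 2) * ((q ^ α - p ^ α) / α) := by
  have huIcc : uIcc p q = Icc p q := uIcc_of_le hpq
  have hmM : m ≤ M := le_trans (hbd p ⟨le_rfl, hpq⟩).1 (hbd p ⟨le_rfl, hpq⟩).2
  have hQc : Continuous (fun x : ℝ => (x ^ α - r) / α - c) :=
    (((Real.continuous_rpow_const hα.le).sub continuous_const).div_const α).sub continuous_const
  have hint : IntervalIntegrable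
      (fun s => ((s ^ α - r) / α - c) * (g s - (m + M) / 2) * s ^ (α - 1)) volume p q := by
    apply cw_int hα
    rw [huIcc]
    exact hQc.continuousOn.mul (hgc.sub continuousOn_const)
  have hint2 : IntervalIntegrable
      (fun s : ℝ => K * ((M - m) / 2) * s ^ (α - 1)) volume p q :=
    (w_int hα p q).const_mul _
  have hptwise : ∀ x ∈ Icc p q,
      |((x ^ α - r) / α - c) * (g x - (m + M) / 2) * x ^ (α - 1)|
        ≤ K * ((M - m) / 2) * x ^ (α - 1) := by
    intro x hx
    have hx0 : 0 ≤ x := le_trans hp hx.1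
    have hw : 0 ≤ x ^ (α - 1) := Real.rpow_nonneg hx0 _
    have hxl : p ^ α ≤ x ^ α := Real.rpow_le_rpow hp hx.1 hα.le
    have hxu : x ^ α ≤ q ^ α := Real.rpow_le_rpow hx0 hx.2 hα.le
    have hα2 : (0 : ℝ) < α := hα
    have hQ : |(x ^ α - r) / α - c| ≤ K := by
      rw [abs_le]
      constructor
      · refine le_trans hlo ?_
        have : (p ^ α - r) / α ≤ (x ^ α - r) / α := by gcongr
        linarith
      · refine le_trans ?_ hhi
        have : (x ^ α - r) / α ≤ (q ^ α - r) / α := by gcongr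
        linarith
    have hgμ : |g x - (m + M) / 2| ≤ (M - m) / 2 := by
      rw [abs_le]
      constructor
      · linarith [(hbd x hx).1]
      · linarith [(hbd x hx).2]
    calc |((x ^ α - r) / α - c) * (g x - (m + M) / 2) * x ^ (α - 1)|
        = |(x ^ α - r) / α - c| * |g x - (m + M) / 2| * x ^ (α - 1) := by
          rw [abs_mul, abs_mul, abs_of_nonneg hw]
      _ ≤ K * ((M - m) / 2) * x ^ (α - 1) := by
          apply mul_le_mul_of_nonneg_right _ hw
          exact mul_le_mul hQ hgμ (abs_nonneg _) hK
  calc |∫ s in p..q, ((s ^ α - r) / α - c) * (g s - (m + M) / 2) * s ^ (α - 1)|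
      ≤ ∫ s in p..q, |((s ^ α - r) / α - c) * (g s - (m + M) / 2) * s ^ (α - 1)| := by
        have h := intervalIntegral.norm_integral_le_integral_norm (μ := volume) (f := fun s =>
            ((s ^ α - r) / α - c) * (g s - (m + M) / 2) * s ^ (α - 1)) hpq
        simp only [Real.norm_eq_abs] at h
        exact h
    _ ≤ ∫ s in p..q, K * ((M - m) / 2) * s ^ (α - 1) :=
        intervalIntegral.integral_mono_on hpq hint.abs hint2 hptwise
    _ = K * ((M - m) / 2) * ((q ^ α - p ^ α) / α) := by
        rw [intervalIntegral.integral_const_mul, integral_rpow (Or.inl (by linarith))]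
        rw [show α - 1 + 1 = α by ring]
private lemma interval_val {α : ℝ} (hα : 0 < α) {f : ℝ → ℝ} {p q : ℝ} (r c μ : ℝ)
    (hp : 0 ≤ p) (hpq : p ≤ q)
    (hd : ∀ x ∈ Icc p q, DifferentiableAt ℝ f x)
    (hg : ContinuousOn (condD α f) (Icc p q)) :
    ∫ s in p..q, ((s ^ α - r) / α - c) * (condD α f s - μ) * s ^ (α - 1)
      = (((q ^ α - r) / α - c) * f q - ((p ^ α - r) / α - c) * f p)
        - (∫ s in p..q, f s * s ^ (α - 1))
        - μ * (((q ^ α - r) / α - c) * ((q ^ α - r) / α - c) / 2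
              - ((p ^ α - r) / α - c) * ((p ^ α - r) / α - c) / 2) := by
  have huIcc : uIcc p q = Icc p q := uIcc_of_le hpq
  have hfc : ContinuousOn f (Icc p q) := fun x hx => ((hd x hx).continuousAt).continuousWithinAt
  have hQc : Continuous (fun x : ℝ => (x ^ α - r) / α - c) :=
    (((Real.continuous_rpow_const hα.le).sub continuous_const).div_const α).sub continuous_const
  have h1 : IntervalIntegrable
      (fun s => (((s ^ α - r) / α - c) * condD α f s + f s) * s ^ (α - 1)) volume p q :=
    cw_int hα (by rw [huIcc]; exact (hQc.continuousOn.mul hg).add hfc)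
  have h2 : IntervalIntegrable (fun s => f s * s ^ (α - 1)) volume p q :=
    cw_int hα (by rw [huIcc]; exact hfc)
  have h3 : IntervalIntegrable (fun s : ℝ => ((s ^ α - r) / α - c) * s ^ (α - 1)) volume p q :=
    cw_int hα hQc.continuousOn
  have hsplit : ∫ s in p..q, ((s ^ α - r) / α - c) * (condD α f s - μ) * s ^ (α - 1)
      = ∫ s in p..q, ((((s ^ α - r) / α - c) * condD α f s + f s) * s ^ (α - 1)
          - f s * s ^ (α - 1) - μ * (((s ^ α - r) / α - c) * s ^ (α - 1))) :=
    intervalIntegral.integral_congr (fun s _ => by ring)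
  rw [hsplit, intervalIntegral.integral_sub (h1.sub h2) (h3.const_mul μ),
    intervalIntegral.integral_sub h1 h2, intervalIntegral.integral_const_mul,
    ftc1 hα r c hp hpq hd hg, ftc2 hα r c hp hpq]

/-- Grüss–Montgomery-type inequality for conformable fractional derivatives. -/
theorem gruss_montgomery (α a b m M : ℝ) (hα : 0 < α ∧ α ≤ 1)
    (ha : 0 ≤ a) (hab : a < b) (f : ℝ → ℝ)
    (hdiff : ∀ x ∈ Icc a b, DifferentiableAt ℝ f x)
    (hcont : ContinuousOn (condD α f) (Icc a b))
    (hbd : ∀ t ∈ Icc a b, m ≤ condD α f t ∧ condD α f t ≤ M)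
    (t : ℝ) (ht : t ∈ Icc a b) :
    |f t - (α / (b ^ α - a ^ α)) * (∫ s in a..b, f s * s ^ (α - 1))
        - ((2 * t ^ α - a ^ α - b ^ α) / (2 * (b ^ α - a ^ α))) * (f b - f a)| ≤
      (1 / 4) * ((b ^ α - a ^ α) / α) * (M - m) := by
  obtain ⟨hα0, hα1⟩ := hα
  obtain ⟨hat, htb⟩ := ht
  have ht0 : 0 ≤ t := le_trans ha hat
  have hAB : a ^ α < b ^ α := Real.rpow_lt_rpow ha hab hα0
  have hAT : a ^ α ≤ t ^ α := Real.rpow_le_rpow ha hat hα0.le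
  have hTB : t ^ α ≤ b ^ α := Real.rpow_le_rpow ht0 htb hα0.le
  have hD0 : 0 < b ^ α - a ^ α := sub_pos.2 hAB
  have h2α : (0 : ℝ) < 2 * α := by linarith
  have hsub1 : Icc a t ⊆ Icc a b := Icc_subset_Icc le_rfl htb
  have hsub2 : Icc t b ⊆ Icc a b := Icc_subset_Icc hat le_rfl
  have hfc : ContinuousOn f (Icc a b) := fun x hx => (hdiff x hx).continuousAt.continuousWithinAt
  have hi1 : IntervalIntegrable (fun s => f s * s ^ (α - 1)) volume a t :=
    cw_int hα0 (by rw [uIcc_of_le hat]; exact hfc.mono hsub1)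
  have hi2 : IntervalIntegrable (fun s => f s * s ^ (α - 1)) volume t b :=
    cw_int hα0 (by rw [uIcc_of_le htb]; exact hfc.mono hsub2)
  have hI : (∫ s in a..b, f s * s ^ (α - 1))
      = (∫ s in a..t, f s * s ^ (α - 1)) + ∫ s in t..b, f s * s ^ (α - 1) :=
    (intervalIntegral.integral_add_adjacent_intervals hi1 hi2).symm
  have hS1 := interval_val hα0 (a ^ α) ((2 * t ^ α - a ^ α - b ^ α) / (2 * α)) ((m + M) / 2)
    ha hat (fun x hx => hdiff x (hsub1 hx)) (hcont.mono hsub1)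
  have hS2 := interval_val hα0 (b ^ α) ((2 * t ^ α - a ^ α - b ^ α) / (2 * α)) ((m + M) / 2)
    ht0 htb (fun x hx => hdiff x (hsub2 hx)) (hcont.mono hsub2)
  have hK0 : (0 : ℝ) ≤ (b ^ α - a ^ α) / (2 * α) := div_nonneg hD0.le h2α.le
  have hB1 := interval_bound (r := a ^ α) (c := (2 * t ^ α - a ^ α - b ^ α) / (2 * α))
      (K := (b ^ α - a ^ α) / (2 * α)) hα0 ha hat (hcont.mono hsub1)
      (fun s hs => hbd s (hsub1 hs)) hK0
      (by
        have e1 : (a ^ α - a ^ α) / α - (2 * t ^ α - a ^ α - b ^ α) / (2 * α)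
            = (a ^ α + b ^ α - 2 * t ^ α) / (2 * α) := by field_simp; ring
        have e2 : -((b ^ α - a ^ α) / (2 * α)) = (a ^ α - b ^ α) / (2 * α) := by ring
        rw [e1, e2]
        exact div_le_div_of_nonneg_right (by linarith) h2α.le)
      (by
        have e1 : (t ^ α - a ^ α) / α - (2 * t ^ α - a ^ α - b ^ α) / (2 * α)
            = (b ^ α - a ^ α) / (2 * α) := by field_simp; ring
        rw [e1])
  have hB2 := interval_bound (r := b ^ α) (c := (2 * t ^ α - a ^ α - b ^ α) / (2 * α))
      (K := (b ^ α - a ^ α) / (2 * α)) hα0 ht0 htb (hcont.mono hsub2)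
      (fun s hs => hbd s (hsub2 hs)) hK0
      (by
        have e1 : (t ^ α - b ^ α) / α - (2 * t ^ α - a ^ α - b ^ α) / (2 * α)
            = (a ^ α - b ^ α) / (2 * α) := by field_simp; ring
        have e2 : -((b ^ α - a ^ α) / (2 * α)) = (a ^ α - b ^ α) / (2 * α) := by ring
        rw [e1, e2])
      (by
        have e1 : (b ^ α - b ^ α) / α - (2 * t ^ α - a ^ α - b ^ α) / (2 * α)
            = (a ^ α + b ^ α - 2 * t ^ α) / (2 * α) := by field_simp; ring
        rw [e1]
        exact div_le_div_of_nonneg_right (by linarith) h2α.le)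
  have hEa : f t - (α / (b ^ α - a ^ α)) * (∫ s in a..b, f s * s ^ (α - 1))
        - ((2 * t ^ α - a ^ α - b ^ α) / (2 * (b ^ α - a ^ α))) * (f b - f a)
      = (α / (b ^ α - a ^ α)) *
        ((∫ s in a..t, ((s ^ α - a ^ α) / α - (2 * t ^ α - a ^ α - b ^ α) / (2 * α))
            * (condD α f s - (m + M) / 2) * s ^ (α - 1))
          + ∫ s in t..b, ((s ^ α - b ^ α) / α - (2 * t ^ α - a ^ α - b ^ α) / (2 * α))
            * (condD α f s - (m + M) / 2) * s ^ (α - 1)) := by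
    rw [hS1, hS2, hI]
    field_simp
    ring
  have hαD : (0 : ℝ) ≤ α / (b ^ α - a ^ α) := (div_pos hα0 hD0).le
  set S1 := ∫ s in a..t, ((s ^ α - a ^ α) / α - (2 * t ^ α - a ^ α - b ^ α) / (2 * α))
      * (condD α f s - (m + M) / 2) * s ^ (α - 1) with hS1d
  set S2 := ∫ s in t..b, ((s ^ α - b ^ α) / α - (2 * t ^ α - a ^ α - b ^ α) / (2 * α))
      * (condD α f s - (m + M) / 2) * s ^ (α - 1) with hS2d
  rw [hEa]
  calc |(α / (b ^ α - a ^ α)) * (S1 + S2)|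
      = (α / (b ^ α - a ^ α)) * |S1 + S2| := by rw [abs_mul, abs_of_nonneg hαD]
    _ ≤ (α / (b ^ α - a ^ α)) * (|S1| + |S2|) := mul_le_mul_of_nonneg_left (abs_add_le _ _) hαD
    _ ≤ (α / (b ^ α - a ^ α)) *
        ((b ^ α - a ^ α) / (2 * α) * ((M - m) / 2) * ((t ^ α - a ^ α) / α)
          + (b ^ α - a ^ α) / (2 * α) * ((M - m) / 2) * ((b ^ α - t ^ α) / α)) :=
        mul_le_mul_of_nonneg_left (add_le_add hB1 hB2) hαD
    _ = (1 / 4) * ((b ^ α - a ^ α) / α) * (M - m) := by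
        field_simp
        ring
end
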